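/- arXiv:2502.16386 — 9 statements merged into one kernel-verified Lean document; each statement's English description precedes it below -/
import Mathlib

section
/- Let α ∈ ℝ and let u, ψ : ℝ × ℝ → ℍ be smooth with u_t = α(u*u_x + u_x*u) + u_xxx (the quaternion KdV equation) and ψ_t = 4ψ_xxx + 2α u*ψ_x + α u_x*ψ. Then the function φ := ψ_xx + (α/3) u*ψ satisfies φ_t = 4φ_xxx + 2α u*φ_x + α u_x*φ. (Left-multiplication Lax pair L = ∂_x² + (α/3)u, M = 4∂_x³ + 2αu∂_x + αu_x for the KdV equation.) -/
/-- Partial derivative in `t` (the first coordinate). -/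
noncomputable def pt (f : ℝ × ℝ → Quaternion ℝ) : ℝ × ℝ → Quaternion ℝ :=
  fun p => deriv (fun s => f (s, p.2)) p.1

/-- Partial derivative in `x` (the second coordinate). -/
noncomputable def px (f : ℝ × ℝ → Quaternion ℝ) : ℝ × ℝ → Quaternion ℝ :=
  fun p => deriv (fun y => f (p.1, y)) p.2

namespace KdVAux

abbrev H := Quaternion ℝ

lemma slice_x {f : ℝ × ℝ → H} (hf : Differentiable ℝ f) (p : ℝ × ℝ) :
    HasDerivAt (fun y => f (p.1, y)) (fderiv ℝ f p ((0:ℝ),(1:ℝ))) p.2 := by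
  have h1 : HasDerivAt (fun y : ℝ => ((p.1, y) : ℝ × ℝ)) ((0:ℝ),(1:ℝ)) p.2 :=
    HasDerivAt.prodMk (hasDerivAt_const _ _) (hasDerivAt_id _)
  have h2 := ((hf p).hasFDerivAt).comp_hasDerivAt p.2 (by simpa using h1)
  exact h2

lemma slice_t {f : ℝ × ℝ → H} (hf : Differentiable ℝ f) (p : ℝ × ℝ) :
    HasDerivAt (fun s => f (s, p.2)) (fderiv ℝ f p ((1:ℝ),(0:ℝ))) p.1 := by
  have h1 : HasDerivAt (fun s : ℝ => ((s, p.2) : ℝ × ℝ)) ((1:ℝ),(0:ℝ)) p.1 :=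
    HasDerivAt.prodMk (hasDerivAt_id _) (hasDerivAt_const _ _)
  have h2 := ((hf p).hasFDerivAt).comp_hasDerivAt p.1 (by simpa using h1)
  exact h2

lemma px_eq {f : ℝ × ℝ → H} (hf : Differentiable ℝ f) (p : ℝ × ℝ) :
    px f p = fderiv ℝ f p ((0:ℝ),(1:ℝ)) := (slice_x hf p).deriv

lemma pt_eq {f : ℝ × ℝ → H} (hf : Differentiable ℝ f) (p : ℝ × ℝ) :
    pt f p = fderiv ℝ f p ((1:ℝ),(0:ℝ)) := (slice_t hf p).deriv

lemma contDiff_px {f : ℝ × ℝ → H} (hf : ContDiff ℝ (⊤ : ℕ∞) f) : ContDiff ℝ (⊤ : ℕ∞) (px f) := by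
  have h : px f = fun p => fderiv ℝ f p ((0:ℝ),(1:ℝ)) :=
    funext (px_eq (hf.differentiable (by simp)))
  rw [h]
  exact (hf.fderiv_right (by simp)).clm_apply contDiff_const

lemma px_add {f g : ℝ × ℝ → H} (hf : Differentiable ℝ f) (hg : Differentiable ℝ g)
    (p : ℝ × ℝ) : px (fun q => f q + g q) p = px f p + px g p :=
  ((slice_x hf p).add (slice_x hg p)).deriv.trans
    (by rw [px_eq hf p, px_eq hg p])

lemma px_smul {f : ℝ × ℝ → H} (c : ℝ) (hf : Differentiable ℝ f) (p : ℝ × ℝ) :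
    px (fun q => c • f q) p = c • px f p :=
  ((slice_x hf p).const_smul c).deriv.trans (by rw [px_eq hf p])

lemma px_mul {f g : ℝ × ℝ → H} (hf : Differentiable ℝ f) (hg : Differentiable ℝ g)
    (p : ℝ × ℝ) : px (fun q => f q * g q) p = px f p * g p + f p * px g p :=
  ((slice_x hf p).mul (slice_x hg p)).deriv.trans
    (by rw [px_eq hf p, px_eq hg p])

lemma pt_add {f g : ℝ × ℝ → H} (hf : Differentiable ℝ f) (hg : Differentiable ℝ g)
    (p : ℝ × ℝ) : pt (fun q => f q + g q) p = pt f p + pt g p :=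
  ((slice_t hf p).add (slice_t hg p)).deriv.trans
    (by rw [pt_eq hf p, pt_eq hg p])

lemma pt_smul {f : ℝ × ℝ → H} (c : ℝ) (hf : Differentiable ℝ f) (p : ℝ × ℝ) :
    pt (fun q => c • f q) p = c • pt f p :=
  ((slice_t hf p).const_smul c).deriv.trans (by rw [pt_eq hf p])

lemma pt_mul {f g : ℝ × ℝ → H} (hf : Differentiable ℝ f) (hg : Differentiable ℝ g)
    (p : ℝ × ℝ) : pt (fun q => f q * g q) p = pt f p * g p + f p * pt g p :=
  ((slice_t hf p).mul (slice_t hg p)).deriv.trans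
    (by rw [pt_eq hf p, pt_eq hg p])

lemma pt_px_comm {f : ℝ × ℝ → H} (hf : ContDiff ℝ (⊤ : ℕ∞) f) : pt (px f) = px (pt f) := by
  funext p
  have hf' : Differentiable ℝ f := hf.differentiable (by simp)
  have hfd : ContDiff ℝ (⊤ : ℕ∞) (fderiv ℝ f) := hf.fderiv_right (by simp)
  have hfd' : DifferentiableAt ℝ (fderiv ℝ f) p := (hfd.differentiable (by simp)) p
  have symm : ∀ v w, fderiv ℝ (fderiv ℝ f) p v w = fderiv ℝ (fderiv ℝ f) p w v :=
    second_derivative_symmetric (fun y => (hf' y).hasFDerivAt) hfd'.hasFDerivAt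
  have key : ∀ v w : ℝ × ℝ,
      fderiv ℝ (fun q => fderiv ℝ f q v) p w = fderiv ℝ (fderiv ℝ f) p w v := by
    intro v w
    rw [fderiv_clm_apply hfd' (differentiableAt_const v)]
    simp
  have hpx : px f = fun q => fderiv ℝ f q ((0:ℝ),(1:ℝ)) := funext (px_eq hf')
  have hpt : pt f = fun q => fderiv ℝ f q ((1:ℝ),(0:ℝ)) := funext (pt_eq hf')
  rw [pt_eq ((contDiff_px hf).differentiable (by simp)) p,
      px_eq ((by rw [hpt]; exact (hf.fderiv_right (by simp)).clm_apply contDiff_const :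
        ContDiff ℝ (⊤ : ℕ∞) (pt f)).differentiable (by simp)) p, hpx, hpt, key, key, symm]

end KdVAux

set_option maxHeartbeats 2000000 in
/-- Left-multiplication Lax pair `L = ∂ₓ² + (α/3)u`, `M = 4∂ₓ³ + 2αu∂ₓ + αuₓ`
for the quaternion KdV equation `uₜ = α(u uₓ + uₓ u) + uₓₓₓ`. -/
theorem kdv_lax_left (α : ℝ) (u ψ φ : ℝ × ℝ → Quaternion ℝ)
    (hu : ContDiff ℝ (⊤ : ℕ∞) u) (hψ : ContDiff ℝ (⊤ : ℕ∞) ψ)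
    (hut : ∀ p, pt u p = α • (u p * px u p + px u p * u p) + px (px (px u)) p)
    (hψt : ∀ p, pt ψ p = (4 : ℝ) • px (px (px ψ)) p + (2 * α) • (u p * px ψ p)
      + α • (px u p * ψ p))
    (hφ : φ = fun p => px (px ψ) p + (α / 3) • (u p * ψ p)) :
    ∀ p, pt φ p = (4 : ℝ) • px (px (px φ)) p + (2 * α) • (u p * px φ p)
      + α • (px u p * φ p) := by
  subst hφ
  have hu1 : ContDiff ℝ (⊤ : ℕ∞) (px u) := KdVAux.contDiff_px hu
  have hu2 : ContDiff ℝ (⊤ : ℕ∞) (px (px u)) := KdVAux.contDiff_px hu1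
  have hs1 : ContDiff ℝ (⊤ : ℕ∞) (px ψ) := KdVAux.contDiff_px hψ
  have hs2 : ContDiff ℝ (⊤ : ℕ∞) (px (px ψ)) := KdVAux.contDiff_px hs1
  have hs3 : ContDiff ℝ (⊤ : ℕ∞) (px (px (px ψ))) := KdVAux.contDiff_px hs2
  have hs4 : ContDiff ℝ (⊤ : ℕ∞) (px (px (px (px ψ)))) := KdVAux.contDiff_px hs3
  have du : Differentiable ℝ u := hu.differentiable (by simp)
  have du1 : Differentiable ℝ (px u) := hu1.differentiable (by simp)
  have du2 : Differentiable ℝ (px (px u)) := hu2.differentiable (by simp)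
  have ds : Differentiable ℝ ψ := hψ.differentiable (by simp)
  have ds1 : Differentiable ℝ (px ψ) := hs1.differentiable (by simp)
  have ds2 : Differentiable ℝ (px (px ψ)) := hs2.differentiable (by simp)
  have ds3 : Differentiable ℝ (px (px (px ψ))) := hs3.differentiable (by simp)
  have ds4 : Differentiable ℝ (px (px (px (px ψ)))) := hs4.differentiable (by simp)
  have E1 : pt ψ = fun q => (4 : ℝ) • px (px (px ψ)) q + (2 * α) • (u q * px ψ q)
      + α • (px u q * ψ q) := funext hψt
  have E2 : px (pt ψ) = fun p => (4:ℝ) • px (px (px (px ψ))) p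
      + (2*α) • (px u p * px ψ p + u p * px (px ψ) p)
      + α • (px (px u) p * ψ p + px u p * px ψ p) := by
    funext p
    erw [E1,
        KdVAux.px_add ((ds3.const_smul (4:ℝ)).add ((du.mul ds1).const_smul (2*α)))
          ((du1.mul ds).const_smul α),
        KdVAux.px_add (ds3.const_smul (4:ℝ)) ((du.mul ds1).const_smul (2*α)),
        KdVAux.px_smul (4:ℝ) ds3, KdVAux.px_smul (2*α) (du.mul ds1),
        KdVAux.px_smul α (du1.mul ds), KdVAux.px_mul du ds1, KdVAux.px_mul du1 ds]
  have E3 : px (px (pt ψ)) = fun p => (4:ℝ) • px (px (px (px (px ψ)))) p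
      + (2*α) • ((px (px u) p * px ψ p + px u p * px (px ψ) p)
          + (px u p * px (px ψ) p + u p * px (px (px ψ)) p))
      + α • ((px (px (px u)) p * ψ p + px (px u) p * px ψ p)
          + (px (px u) p * px ψ p + px u p * px (px ψ) p)) := by
    funext p
    erw [E2,
        KdVAux.px_add ((ds4.const_smul (4:ℝ)).add
            (((du1.mul ds1).add (du.mul ds2)).const_smul (2*α)))
          (((du2.mul ds).add (du1.mul ds1)).const_smul α),
        KdVAux.px_add (ds4.const_smul (4:ℝ))
          (((du1.mul ds1).add (du.mul ds2)).const_smul (2*α)),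
        KdVAux.px_smul (4:ℝ) ds4,
        KdVAux.px_smul (2*α) ((du1.mul ds1).add (du.mul ds2)),
        KdVAux.px_smul α ((du2.mul ds).add (du1.mul ds1)),
        KdVAux.px_add (du1.mul ds1) (du.mul ds2),
        KdVAux.px_add (du2.mul ds) (du1.mul ds1),
        KdVAux.px_mul du1 ds1, KdVAux.px_mul du ds2, KdVAux.px_mul du2 ds]
  have F1 : px (fun p => px (px ψ) p + (α / 3) • (u p * ψ p))
      = fun p => px (px (px ψ)) p + (α/3) • (px u p * ψ p + u p * px ψ p) := by
    funext p
    erw [KdVAux.px_add ds2 ((du.mul ds).const_smul (α/3)),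
        KdVAux.px_smul (α/3) (du.mul ds), KdVAux.px_mul du ds]
  have F2 : px (fun p => px (px (px ψ)) p + (α/3) • (px u p * ψ p + u p * px ψ p))
      = fun p => px (px (px (px ψ))) p
        + (α/3) • ((px (px u) p * ψ p + px u p * px ψ p)
            + (px u p * px ψ p + u p * px (px ψ) p)) := by
    funext p
    erw [KdVAux.px_add ds3 (((du1.mul ds).add (du.mul ds1)).const_smul (α/3)),
        KdVAux.px_smul (α/3) ((du1.mul ds).add (du.mul ds1)),
        KdVAux.px_add (du1.mul ds) (du.mul ds1),
        KdVAux.px_mul du1 ds, KdVAux.px_mul du ds1]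
  have F3 : px (fun p => px (px (px (px ψ))) p
        + (α/3) • ((px (px u) p * ψ p + px u p * px ψ p)
            + (px u p * px ψ p + u p * px (px ψ) p)))
      = fun p => px (px (px (px (px ψ)))) p
        + (α/3) • (((px (px (px u)) p * ψ p + px (px u) p * px ψ p)
              + (px (px u) p * px ψ p + px u p * px (px ψ) p))
            + ((px (px u) p * px ψ p + px u p * px (px ψ) p)
              + (px u p * px (px ψ) p + u p * px (px (px ψ)) p))) := by
    funext p
    erw [KdVAux.px_add ds4 ((((du2.mul ds).add (du1.mul ds1)).add
          ((du1.mul ds1).add (du.mul ds2))).const_smul (α/3)),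
        KdVAux.px_smul (α/3) (((du2.mul ds).add (du1.mul ds1)).add
          ((du1.mul ds1).add (du.mul ds2))),
        KdVAux.px_add ((du2.mul ds).add (du1.mul ds1)) ((du1.mul ds1).add (du.mul ds2)),
        KdVAux.px_add (du2.mul ds) (du1.mul ds1),
        KdVAux.px_add (du1.mul ds1) (du.mul ds2),
        KdVAux.px_mul du2 ds, KdVAux.px_mul du1 ds1, KdVAux.px_mul du ds2]
  have hcomm2 : pt (px (px ψ)) = px (px (pt ψ)) := by
    rw [KdVAux.pt_px_comm hs1, KdVAux.pt_px_comm hψ]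
  intro p
  erw [KdVAux.pt_add ds2 ((du.mul ds).const_smul (α/3)),
      KdVAux.pt_smul (α/3) (du.mul ds),
      KdVAux.pt_mul du ds,
      hcomm2, E3, hut p, hψt p, F1, F2, F3]
  simp only [smul_add, smul_smul, mul_add, add_mul, mul_smul_comm, smul_mul_assoc, mul_assoc]
  module
end

section
/- Let α ∈ ℝ and let u, ψ : ℝ × ℝ → ℍ be smooth with u_t = α(u*u_x + u_x*u) + u_xxx (the quaternion KdV equation) and ψ_t = 4ψ_xxx + 2α ψ_x*u + α ψ*u_x. Then the function φ := ψ_xx + (α/3) ψ*u satisfies φ_t = 4φ_xxx + 2α φ_x*u + α φ*u_x. (Right-multiplication Lax pair for the KdV equation.) -/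
namespace KdVHelpers

variable {f g : ℝ × ℝ → Quaternion ℝ}

lemma hasDerivAt_slice_x (hf : ContDiff ℝ (⊤ : ℕ∞) f) (p : ℝ × ℝ) :
    HasDerivAt (fun y => f (p.1, y)) (fderiv ℝ f p ((0 : ℝ), (1 : ℝ))) p.2 := by
  have h1 : HasDerivAt (fun y : ℝ => ((p.1 : ℝ), y)) (((0 : ℝ), (1 : ℝ)) : ℝ × ℝ) p.2 :=
    (hasDerivAt_const _ _).prodMk (hasDerivAt_id _)
  have h2 : HasFDerivAt f (fderiv ℝ f p) p := (hf.differentiable (by simp) p).hasFDerivAt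
  exact h2.comp_hasDerivAt p.2 h1

lemma hasDerivAt_slice_t (hf : ContDiff ℝ (⊤ : ℕ∞) f) (p : ℝ × ℝ) :
    HasDerivAt (fun s => f (s, p.2)) (fderiv ℝ f p ((1 : ℝ), (0 : ℝ))) p.1 := by
  have h1 : HasDerivAt (fun s : ℝ => ((s : ℝ), p.2)) (((1 : ℝ), (0 : ℝ)) : ℝ × ℝ) p.1 :=
    (hasDerivAt_id _).prodMk (hasDerivAt_const _ _)
  have h2 : HasFDerivAt f (fderiv ℝ f p) p := (hf.differentiable (by simp) p).hasFDerivAt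
  exact h2.comp_hasDerivAt p.1 h1

lemma px_eq (hf : ContDiff ℝ (⊤ : ℕ∞) f) (p : ℝ × ℝ) :
    px f p = fderiv ℝ f p ((0 : ℝ), (1 : ℝ)) := (hasDerivAt_slice_x hf p).deriv

lemma pt_eq (hf : ContDiff ℝ (⊤ : ℕ∞) f) (p : ℝ × ℝ) :
    pt f p = fderiv ℝ f p ((1 : ℝ), (0 : ℝ)) := (hasDerivAt_slice_t hf p).deriv

lemma px_slice (hf : ContDiff ℝ (⊤ : ℕ∞) f) (p : ℝ × ℝ) :
    HasDerivAt (fun y => f (p.1, y)) (px f p) p.2 := by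
  rw [px_eq hf]; exact hasDerivAt_slice_x hf p

lemma pt_slice (hf : ContDiff ℝ (⊤ : ℕ∞) f) (p : ℝ × ℝ) :
    HasDerivAt (fun s => f (s, p.2)) (pt f p) p.1 := by
  rw [pt_eq hf]; exact hasDerivAt_slice_t hf p

lemma contDiff_px (hf : ContDiff ℝ (⊤ : ℕ∞) f) : ContDiff ℝ (⊤ : ℕ∞) (px f) := by
  have h : px f = fun p => fderiv ℝ f p ((0 : ℝ), (1 : ℝ)) := funext (px_eq hf)
  rw [h]; exact (hf.fderiv_right (by simp)).clm_apply contDiff_const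

lemma contDiff_pt (hf : ContDiff ℝ (⊤ : ℕ∞) f) : ContDiff ℝ (⊤ : ℕ∞) (pt f) := by
  have h : pt f = fun p => fderiv ℝ f p ((1 : ℝ), (0 : ℝ)) := funext (pt_eq hf)
  rw [h]; exact (hf.fderiv_right (by simp)).clm_apply contDiff_const

lemma pt_px_comm (hf : ContDiff ℝ (⊤ : ℕ∞) f) : pt (px f) = px (pt f) := by
  funext p
  have hdf : ContDiff ℝ (⊤ : ℕ∞) (fderiv ℝ f) := hf.fderiv_right (by simp)
  have h2 : HasFDerivAt (fderiv ℝ f) (fderiv ℝ (fderiv ℝ f) p) p :=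
    (hdf.differentiable (by simp) p).hasFDerivAt
  have hsymm := second_derivative_symmetric
    (fun y => (hf.differentiable (by simp) y).hasFDerivAt) h2
  have hx_fun : px f = fun q => fderiv ℝ f q ((0 : ℝ), (1 : ℝ)) := funext (px_eq hf)
  have ht_fun : pt f = fun q => fderiv ℝ f q ((1 : ℝ), (0 : ℝ)) := funext (pt_eq hf)
  have hXd : HasFDerivAt (px f)
      ((ContinuousLinearMap.apply ℝ (Quaternion ℝ) (((0 : ℝ), (1 : ℝ)) : ℝ × ℝ)).comp
        (fderiv ℝ (fderiv ℝ f) p)) p := by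
    rw [hx_fun]
    exact (ContinuousLinearMap.apply ℝ (Quaternion ℝ)
      (((0 : ℝ), (1 : ℝ)) : ℝ × ℝ)).hasFDerivAt.comp p h2
  have hTd : HasFDerivAt (pt f)
      ((ContinuousLinearMap.apply ℝ (Quaternion ℝ) (((1 : ℝ), (0 : ℝ)) : ℝ × ℝ)).comp
        (fderiv ℝ (fderiv ℝ f) p)) p := by
    rw [ht_fun]
    exact (ContinuousLinearMap.apply ℝ (Quaternion ℝ)
      (((1 : ℝ), (0 : ℝ)) : ℝ × ℝ)).hasFDerivAt.comp p h2
  calc pt (px f) p = fderiv ℝ (px f) p ((1 : ℝ), (0 : ℝ)) := pt_eq (contDiff_px hf) p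
    _ = fderiv ℝ (fderiv ℝ f) p ((1 : ℝ), (0 : ℝ)) (((0 : ℝ), (1 : ℝ)) : ℝ × ℝ) := by
        rw [hXd.fderiv]; rfl
    _ = fderiv ℝ (fderiv ℝ f) p ((0 : ℝ), (1 : ℝ)) (((1 : ℝ), (0 : ℝ)) : ℝ × ℝ) := hsymm _ _
    _ = fderiv ℝ (pt f) p ((0 : ℝ), (1 : ℝ)) := by rw [hTd.fderiv]; rfl
    _ = px (pt f) p := (px_eq (contDiff_pt hf) p).symm

end KdVHelpers

set_option maxHeartbeats 2000000 in
open KdVHelpers in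
/-- Right-multiplication Lax pair for the quaternion KdV equation
`uₜ = α(u uₓ + uₓ u) + uₓₓₓ`. -/
theorem kdv_lax_right (α : ℝ) (u ψ φ : ℝ × ℝ → Quaternion ℝ)
    (hu : ContDiff ℝ (⊤ : ℕ∞) u) (hψ : ContDiff ℝ (⊤ : ℕ∞) ψ)
    (hut : ∀ p, pt u p = α • (u p * px u p + px u p * u p) + px (px (px u)) p)
    (hψt : ∀ p, pt ψ p = (4 : ℝ) • px (px (px ψ)) p + (2 * α) • (px ψ p * u p)
      + α • (ψ p * px u p))
    (hφ : φ = fun p => px (px ψ) p + (α / 3) • (ψ p * u p)) :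
    ∀ p, pt φ p = (4 : ℝ) • px (px (px φ)) p + (2 * α) • (px φ p * u p)
      + α • (φ p * px u p) := by
  subst hφ
  have hu1 : ContDiff ℝ (⊤ : ℕ∞) (px u) := contDiff_px hu
  have hu2 : ContDiff ℝ (⊤ : ℕ∞) (px (px u)) := contDiff_px hu1
  have hψ1 : ContDiff ℝ (⊤ : ℕ∞) (px ψ) := contDiff_px hψ
  have hψ2 : ContDiff ℝ (⊤ : ℕ∞) (px (px ψ)) := contDiff_px hψ1
  have hψ3 : ContDiff ℝ (⊤ : ℕ∞) (px (px (px ψ))) := contDiff_px hψ2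
  have hψ4 : ContDiff ℝ (⊤ : ℕ∞) (px (px (px (px ψ)))) := contDiff_px hψ3
  have E1 : px (fun q => px (px ψ) q + (α / 3) • (ψ q * u q))
      = fun p => px (px (px ψ)) p + (α / 3) • (px ψ p * u p + ψ p * px u p) :=
    funext fun p => ((px_slice hψ2 p).add
      (HasDerivAt.const_smul (α / 3) ((px_slice hψ p).mul (px_slice hu p)))).deriv
  have E2 : px (px (fun q => px (px ψ) q + (α / 3) • (ψ q * u q)))
      = fun p => px (px (px (px ψ))) p + (α / 3) •
          ((px (px ψ) p * u p + px ψ p * px u p)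
            + (px ψ p * px u p + ψ p * px (px u) p)) := by
    rw [E1]
    exact funext fun p => ((px_slice hψ3 p).add
      (HasDerivAt.const_smul (α / 3)
        (((px_slice hψ1 p).mul (px_slice hu p)).add
          ((px_slice hψ p).mul (px_slice hu1 p))))).deriv
  have E3 : px (px (px (fun q => px (px ψ) q + (α / 3) • (ψ q * u q))))
      = fun p => px (px (px (px (px ψ)))) p + (α / 3) •
          (((px (px (px ψ)) p * u p + px (px ψ) p * px u p)
              + (px (px ψ) p * px u p + px ψ p * px (px u) p))
            + ((px (px ψ) p * px u p + px ψ p * px (px u) p)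
              + (px ψ p * px (px u) p + ψ p * px (px (px u)) p))) := by
    rw [E2]
    exact funext fun p => ((px_slice hψ4 p).add
      (HasDerivAt.const_smul (α / 3)
        ((((px_slice hψ2 p).mul (px_slice hu p)).add
            ((px_slice hψ1 p).mul (px_slice hu1 p))).add
          (((px_slice hψ1 p).mul (px_slice hu1 p)).add
            ((px_slice hψ p).mul (px_slice hu2 p)))))).deriv
  have CT : pt (fun q => px (px ψ) q + (α / 3) • (ψ q * u q))
      = fun p => pt (px (px ψ)) p + (α / 3) • (pt ψ p * u p + ψ p * pt u p) :=
    funext fun p => ((pt_slice hψ2 p).add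
      (HasDerivAt.const_smul (α / 3) ((pt_slice hψ p).mul (pt_slice hu p)))).deriv
  have hψt' : pt ψ = fun p => (4 : ℝ) • px (px (px ψ)) p + (2 * α) • (px ψ p * u p)
      + α • (ψ p * px u p) := funext hψt
  have T1 : px (fun p => (4 : ℝ) • px (px (px ψ)) p + (2 * α) • (px ψ p * u p)
        + α • (ψ p * px u p))
      = fun p => (4 : ℝ) • px (px (px (px ψ))) p
        + (2 * α) • (px (px ψ) p * u p + px ψ p * px u p)
        + α • (px ψ p * px u p + ψ p * px (px u) p) :=
    funext fun p => (((HasDerivAt.const_smul (4 : ℝ) (px_slice hψ3 p)).add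
        (HasDerivAt.const_smul (2 * α) ((px_slice hψ1 p).mul (px_slice hu p)))).add
      (HasDerivAt.const_smul α ((px_slice hψ p).mul (px_slice hu1 p)))).deriv
  have T2 : px (fun p => (4 : ℝ) • px (px (px (px ψ))) p
        + (2 * α) • (px (px ψ) p * u p + px ψ p * px u p)
        + α • (px ψ p * px u p + ψ p * px (px u) p))
      = fun p => (4 : ℝ) • px (px (px (px (px ψ)))) p
        + (2 * α) • ((px (px (px ψ)) p * u p + px (px ψ) p * px u p)
            + (px (px ψ) p * px u p + px ψ p * px (px u) p))
        + α • ((px (px ψ) p * px u p + px ψ p * px (px u) p)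
            + (px ψ p * px (px u) p + ψ p * px (px (px u)) p)) :=
    funext fun p => (((HasDerivAt.const_smul (4 : ℝ) (px_slice hψ4 p)).add
        (HasDerivAt.const_smul (2 * α) (((px_slice hψ2 p).mul (px_slice hu p)).add
          ((px_slice hψ1 p).mul (px_slice hu1 p))))).add
      (HasDerivAt.const_smul α (((px_slice hψ1 p).mul (px_slice hu1 p)).add
        ((px_slice hψ p).mul (px_slice hu2 p))))).deriv
  have T : px (px (pt ψ))
      = fun p => (4 : ℝ) • px (px (px (px (px ψ)))) p
        + (2 * α) • ((px (px (px ψ)) p * u p + px (px ψ) p * px u p)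
            + (px (px ψ) p * px u p + px ψ p * px (px u) p))
        + α • ((px (px ψ) p * px u p + px ψ p * px (px u) p)
            + (px ψ p * px (px u) p + ψ p * px (px (px u)) p)) := by
    rw [hψt', T1, T2]
  have CC : pt (px (px ψ)) = px (px (pt ψ)) := by
    rw [pt_px_comm hψ1, pt_px_comm hψ]
  intro p
  rw [congrFun CT p, congrFun CC p, congrFun T p, hψt p, hut p,
    congrFun E3 p, congrFun E1 p]
  simp only [smul_add, smul_smul, mul_add, add_mul, smul_mul_assoc, mul_smul_comm, mul_assoc]
  match_scalars <;> ring
end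

section
/- Let α ∈ ℝ and let u, ψ : ℝ × ℝ → ℍ be smooth with u_t = α(u*u_x + u_x*u) + u_xxx and ψ_t = 4ψ_xxx + 2α u*ψ_x + α u_x*ψ. Define Λf := f_xx + (α/3) u*f for ℍ-valued functions f, and set φ := Λ(Λψ). Then φ_t = 4φ_xxx + 2α u*φ_x + α u_x*φ. (The pair (L², M) with weight w_L = 4 is a Lax pair for the KdV equation.) -/
def Sm (f : ℝ × ℝ → Quaternion ℝ) : Prop := ContDiff ℝ ((⊤ : ℕ∞) : WithTop ℕ∞) f

def DX (f f' : ℝ × ℝ → Quaternion ℝ) : Prop :=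
  ∀ p : ℝ × ℝ, HasDerivAt (fun y => f (p.1, y)) (f' p) p.2

def DT (f f' : ℝ × ℝ → Quaternion ℝ) : Prop :=
  ∀ p : ℝ × ℝ, HasDerivAt (fun s => f (s, p.2)) (f' p) p.1

section lemmas
variable {f g f' g' : ℝ × ℝ → Quaternion ℝ}

lemma one_le_st : (1 : WithTop ℕ∞) ≤ ((⊤ : ℕ∞) : WithTop ℕ∞) := by
  exact_mod_cast le_top

lemma st_add_one : ((⊤ : ℕ∞) : WithTop ℕ∞) + 1 ≤ ((⊤ : ℕ∞) : WithTop ℕ∞) := by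
  norm_num

lemma Sm.diff (hf : Sm f) : Differentiable ℝ f := hf.differentiable (by simp)

lemma Sm.fd (hf : Sm f) : ContDiff ℝ ((⊤ : ℕ∞) : WithTop ℕ∞) (fderiv ℝ f) :=
  hf.fderiv_right st_add_one

lemma hasDerivAt_sliceX (hf : Sm f) (p : ℝ × ℝ) :
    HasDerivAt (fun y => f (p.1, y)) (fderiv ℝ f p ((0:ℝ), (1:ℝ))) p.2 := by
  have h1 : HasDerivAt (fun y : ℝ => ((p.1, y) : ℝ × ℝ)) ((0:ℝ), (1:ℝ)) p.2 :=
    (hasDerivAt_const _ _).prodMk (hasDerivAt_id _)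
  exact (hf.diff p).hasFDerivAt.comp_hasDerivAt_of_eq p.2 h1 (by simp)

lemma hasDerivAt_sliceT (hf : Sm f) (p : ℝ × ℝ) :
    HasDerivAt (fun s => f (s, p.2)) (fderiv ℝ f p ((1:ℝ), (0:ℝ))) p.1 := by
  have h1 : HasDerivAt (fun s : ℝ => ((s, p.2) : ℝ × ℝ)) ((1:ℝ), (0:ℝ)) p.1 :=
    (hasDerivAt_id _).prodMk (hasDerivAt_const _ _)
  exact (hf.diff p).hasFDerivAt.comp_hasDerivAt_of_eq p.1 h1 (by simp)

lemma px_eq (hf : Sm f) (p : ℝ × ℝ) : px f p = fderiv ℝ f p ((0:ℝ), (1:ℝ)) :=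
  (hasDerivAt_sliceX hf p).deriv

lemma pt_eq (hf : Sm f) (p : ℝ × ℝ) : pt f p = fderiv ℝ f p ((1:ℝ), (0:ℝ)) :=
  (hasDerivAt_sliceT hf p).deriv

lemma Sm.px (hf : Sm f) : Sm (px f) := by
  have : _root_.px f = fun p => fderiv ℝ f p ((0:ℝ), (1:ℝ)) := funext (px_eq hf)
  rw [Sm, this]
  exact hf.fd.clm_apply contDiff_const

lemma Sm.dx (hf : Sm f) : DX f (_root_.px f) := by
  intro p
  rw [_root_.px_eq hf]; exact hasDerivAt_sliceX hf p

lemma Sm.dt (hf : Sm f) : DT f (_root_.pt f) := by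
  intro p
  rw [_root_.pt_eq hf]; exact hasDerivAt_sliceT hf p

lemma DX.px_eq (h : DX f f') : px f = f' := funext fun p => (h p).deriv

lemma DT.pt_eq (h : DT f f') : pt f = f' := funext fun p => (h p).deriv

lemma DX.add (h : DX f f') (h' : DX g g') :
    DX (fun p => f p + g p) (fun p => f' p + g' p) := fun p => (h p).add (h' p)

lemma DX.smul (r : ℝ) (h : DX f f') :
    DX (fun p => r • f p) (fun p => r • f' p) := fun p => (h p).const_smul r

lemma DX.mul (h : DX f f') (h' : DX g g') :
    DX (fun p => f p * g p) (fun p => f' p * g p + f p * g' p) :=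
  fun p => (h p).mul (h' p)

lemma DT.add (h : DT f f') (h' : DT g g') :
    DT (fun p => f p + g p) (fun p => f' p + g' p) := fun p => (h p).add (h' p)

lemma DT.smul (r : ℝ) (h : DT f f') :
    DT (fun p => r • f p) (fun p => r • f' p) := fun p => (h p).const_smul r

lemma DT.mul (h : DT f f') (h' : DT g g') :
    DT (fun p => f p * g p) (fun p => f' p * g p + f p * g' p) :=
  fun p => (h p).mul (h' p)

lemma pt_px (hf : Sm f) : pt (px f) = px (pt f) := by
  have hd : ∀ p : ℝ × ℝ, DifferentiableAt ℝ (fderiv ℝ f) p := fun p =>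
    hf.fd.differentiable (by simp) p
  have hsym : ∀ (p v w : ℝ × ℝ),
      fderiv ℝ (fderiv ℝ f) p v w = fderiv ℝ (fderiv ℝ f) p w v := fun p v w =>
    second_derivative_symmetric (fun y => (hf.diff y).hasFDerivAt) (hd p).hasFDerivAt v w
  have key : ∀ (v w p : ℝ × ℝ),
      fderiv ℝ (fun q => fderiv ℝ f q v) p w = fderiv ℝ (fderiv ℝ f) p w v := by
    intro v w p
    have e : (fun q => fderiv ℝ f q v)
        = (ContinuousLinearMap.apply ℝ (Quaternion ℝ) v) ∘ (fderiv ℝ f) := rfl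
    rw [e, fderiv_comp p (ContinuousLinearMap.apply ℝ (Quaternion ℝ) v).differentiableAt (hd p)]
    simp
  funext p
  have h1 : _root_.px f = fun q => fderiv ℝ f q ((0:ℝ),(1:ℝ)) := funext (px_eq hf)
  have h2 : _root_.pt f = fun q => fderiv ℝ f q ((1:ℝ),(0:ℝ)) := funext (pt_eq hf)
  have hG1 : Sm (fun q => fderiv ℝ f q ((0:ℝ),(1:ℝ))) := hf.fd.clm_apply contDiff_const
  have hG2 : Sm (fun q => fderiv ℝ f q ((1:ℝ),(0:ℝ))) := hf.fd.clm_apply contDiff_const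
  rw [h1, h2, pt_eq hG1 p, px_eq hG2 p, key, key, hsym]

lemma Sm.mul' (hf : Sm f) (hg : Sm g) : Sm (fun p => f p * g p) := ContDiff.mul hf hg
lemma Sm.add' (hf : Sm f) (hg : Sm g) : Sm (fun p => f p + g p) := ContDiff.add hf hg
lemma Sm.smul' (r : ℝ) (hf : Sm f) : Sm (fun p => r • f p) := ContDiff.const_smul r hf

end lemmas

lemma lax_step (α : ℝ) {u f : ℝ × ℝ → Quaternion ℝ} (hu : Sm u) (hf : Sm f)
    (hut : ∀ p, pt u p = α • (u p * px u p + px u p * u p) + px (px (px u)) p)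
    (hft : ∀ p, pt f p = (4 : ℝ) • px (px (px f)) p + (2 * α) • (u p * px f p)
      + α • (px u p * f p)) :
    ∀ p, pt (fun p => px (px f) p + (α / 3) • (u p * f p)) p
      = (4 : ℝ) • px (px (px (fun p => px (px f) p + (α / 3) • (u p * f p)))) p
        + (2 * α) • (u p * px (fun p => px (px f) p + (α / 3) • (u p * f p)) p)
        + α • (px u p * (px (px f) p + (α / 3) • (u p * f p))) := by
  -- abbreviations for derivatives
  have hu1 : Sm (px u) := hu.px
  have hu2 : Sm (px (px u)) := hu1.px
  have hf1 : Sm (px f) := hf.px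
  have hf2 : Sm (px (px f)) := hf1.px
  have hf3 : Sm (px (px (px f))) := hf2.px
  have hf4 : Sm (px (px (px (px f)))) := hf3.px
  -- time derivative of G
  have ePtG : pt (fun p => px (px f) p + (α / 3) • (u p * f p))
      = fun p => pt (px (px f)) p + (α / 3) • (pt u p * f p + u p * pt f p) :=
    (DT.add hf2.dt (DT.smul _ (DT.mul hu.dt hf.dt))).pt_eq
  -- commute t and x derivatives
  have comm : pt (px (px f)) = px (px (pt f)) := by
    rw [pt_px hf1, pt_px hf]
  -- substitute the evolution equation for f
  have hft' : pt f = fun p => (4 : ℝ) • px (px (px f)) p + (2 * α) • (u p * px f p)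
      + α • (px u p * f p) := funext hft
  -- first x-derivative of M f
  have eM1 : px (fun p => (4 : ℝ) • px (px (px f)) p + (2 * α) • (u p * px f p)
        + α • (px u p * f p))
      = fun p => (4 : ℝ) • px (px (px (px f))) p
        + (2 * α) • (px u p * px f p + u p * px (px f) p)
        + α • (px (px u) p * f p + px u p * px f p) :=
    (DX.add (DX.add (DX.smul _ hf3.dx) (DX.smul _ (DX.mul hu.dx hf1.dx)))
      (DX.smul _ (DX.mul hu1.dx hf.dx))).px_eq
  -- second x-derivative of M f
  have eM2 : px (fun p => (4 : ℝ) • px (px (px (px f))) p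
        + (2 * α) • (px u p * px f p + u p * px (px f) p)
        + α • (px (px u) p * f p + px u p * px f p))
      = fun p => (4 : ℝ) • px (px (px (px (px f)))) p
        + (2 * α) • ((px (px u) p * px f p + px u p * px (px f) p)
            + (px u p * px (px f) p + u p * px (px (px f)) p))
        + α • ((px (px (px u)) p * f p + px (px u) p * px f p)
            + (px (px u) p * px f p + px u p * px (px f) p)) :=
    (DX.add (DX.add (DX.smul _ hf4.dx)
        (DX.smul _ (DX.add (DX.mul hu1.dx hf1.dx) (DX.mul hu.dx hf2.dx))))
      (DX.smul _ (DX.add (DX.mul hu2.dx hf.dx) (DX.mul hu1.dx hf1.dx)))).px_eq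
  -- x-derivatives of G
  have eG1 : px (fun p => px (px f) p + (α / 3) • (u p * f p))
      = fun p => px (px (px f)) p + (α / 3) • (px u p * f p + u p * px f p) :=
    (DX.add hf2.dx (DX.smul _ (DX.mul hu.dx hf.dx))).px_eq
  have eG2 : px (fun p => px (px (px f)) p + (α / 3) • (px u p * f p + u p * px f p))
      = fun p => px (px (px (px f))) p
        + (α / 3) • ((px (px u) p * f p + px u p * px f p)
            + (px u p * px f p + u p * px (px f) p)) :=
    (DX.add hf3.dx (DX.smul _ (DX.add (DX.mul hu1.dx hf.dx) (DX.mul hu.dx hf1.dx)))).px_eq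
  have eG3 : px (fun p => px (px (px (px f))) p
        + (α / 3) • ((px (px u) p * f p + px u p * px f p)
            + (px u p * px f p + u p * px (px f) p)))
      = fun p => px (px (px (px (px f)))) p
        + (α / 3) • (((px (px (px u)) p * f p + px (px u) p * px f p)
              + (px (px u) p * px f p + px u p * px (px f) p))
            + ((px (px u) p * px f p + px u p * px (px f) p)
              + (px u p * px (px f) p + u p * px (px (px f)) p))) :=
    (DX.add hf4.dx (DX.smul _ (DX.add
      (DX.add (DX.mul hu2.dx hf.dx) (DX.mul hu1.dx hf1.dx))
      (DX.add (DX.mul hu1.dx hf1.dx) (DX.mul hu.dx hf2.dx))))).px_eq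
  intro p
  rw [ePtG, comm, hft', eM1, eM2, eG1, eG2, eG3]
  beta_reduce
  rw [hut p]
  simp only [smul_add, mul_add, add_mul, mul_smul_comm, smul_mul_assoc, smul_smul, mul_assoc]
  module

/-- The pair `(L², M)` with weight `w_L = 4` is a Lax pair for the quaternion
KdV equation, where `Λf := fₓₓ + (α/3) u f` and `φ := Λ(Λψ)`. -/
theorem kdv_lax_Lsq (α : ℝ) (u ψ : ℝ × ℝ → Quaternion ℝ)
    (Λ : (ℝ × ℝ → Quaternion ℝ) → (ℝ × ℝ → Quaternion ℝ)) (φ : ℝ × ℝ → Quaternion ℝ)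
    (hu : ContDiff ℝ (⊤ : ℕ∞) u) (hψ : ContDiff ℝ (⊤ : ℕ∞) ψ)
    (hut : ∀ p, pt u p = α • (u p * px u p + px u p * u p) + px (px (px u)) p)
    (hψt : ∀ p, pt ψ p = (4 : ℝ) • px (px (px ψ)) p + (2 * α) • (u p * px ψ p)
      + α • (px u p * ψ p))
    (hΛ : Λ = fun f => fun p => px (px f) p + (α / 3) • (u p * f p))
    (hφ : φ = Λ (Λ ψ)) :
    ∀ p, pt φ p = (4 : ℝ) • px (px (px φ)) p + (2 * α) • (u p * px φ p)
      + α • (px u p * φ p) := by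
  subst hφ hΛ
  have hu' : Sm u := hu.of_le (by simp)
  have hψ' : Sm ψ := hψ.of_le (by simp)
  have hΛψ : Sm (fun p => px (px ψ) p + (α / 3) • (u p * ψ p)) :=
    Sm.add' hψ'.px.px (Sm.smul' _ (Sm.mul' hu' hψ'))
  exact lax_step α hu' hΛψ hut (lax_step α hu' hψ' hut hψt)
end

section
/- Let σ ∈ ℝ with σ² = 1 and let u, ψ : ℝ × ℝ → ℍ be smooth with u_t = σ u_x² + u_xxx (the quaternion potential KdV equation) and ψ_t = 4ψ_xxx + 2σ ψ_x*u_x + σ ψ*u_xx. Then the function φ := ψ_xx + (σ/3) ψ*u_x satisfies φ_t = 4φ_xxx + 2σ φ_x*u_x + σ φ*u_xx. (Right-multiplication Lax pair for the potential KdV equation.) -/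
namespace PKdV

variable {f g : ℝ × ℝ → Quaternion ℝ}

lemma slice_x (hf : ContDiff ℝ (⊤ : ℕ∞) f) (p : ℝ × ℝ) :
    HasDerivAt (fun y => f (p.1, y)) (fderiv ℝ f p ((0:ℝ),(1:ℝ))) p.2 :=
  ((hf.differentiable (by simp)) p).hasFDerivAt.comp_hasDerivAt p.2
    (HasDerivAt.prodMk (hasDerivAt_const _ _) (hasDerivAt_id _))

lemma slice_t (hf : ContDiff ℝ (⊤ : ℕ∞) f) (p : ℝ × ℝ) :
    HasDerivAt (fun s => f (s, p.2)) (fderiv ℝ f p ((1:ℝ),(0:ℝ))) p.1 :=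
  ((hf.differentiable (by simp)) p).hasFDerivAt.comp_hasDerivAt p.1
    (HasDerivAt.prodMk (hasDerivAt_id _) (hasDerivAt_const _ _))

lemma px_eq (hf : ContDiff ℝ (⊤ : ℕ∞) f) (p : ℝ × ℝ) : px f p = fderiv ℝ f p ((0:ℝ),(1:ℝ)) :=
  (slice_x hf p).deriv

lemma pt_eq (hf : ContDiff ℝ (⊤ : ℕ∞) f) (p : ℝ × ℝ) : pt f p = fderiv ℝ f p ((1:ℝ),(0:ℝ)) :=
  (slice_t hf p).deriv

lemma smooth_px (hf : ContDiff ℝ (⊤ : ℕ∞) f) : ContDiff ℝ (⊤ : ℕ∞) (px f) := by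
  have : px f = fun p =>
      (ContinuousLinearMap.apply ℝ (Quaternion ℝ) ((0:ℝ),(1:ℝ))) (fderiv ℝ f p) :=
    funext (px_eq hf)
  rw [this]
  exact (ContinuousLinearMap.apply ℝ (Quaternion ℝ) _).contDiff.comp (hf.fderiv_right (m := (⊤ : ℕ∞)) (by simp))

lemma smooth_pt (hf : ContDiff ℝ (⊤ : ℕ∞) f) : ContDiff ℝ (⊤ : ℕ∞) (pt f) := by
  have : pt f = fun p =>
      (ContinuousLinearMap.apply ℝ (Quaternion ℝ) ((1:ℝ),(0:ℝ))) (fderiv ℝ f p) :=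
    funext (pt_eq hf)
  rw [this]
  exact (ContinuousLinearMap.apply ℝ (Quaternion ℝ) _).contDiff.comp (hf.fderiv_right (m := (⊤ : ℕ∞)) (by simp))

lemma pt_px_comm (hf : ContDiff ℝ (⊤ : ℕ∞) f) : pt (px f) = px (pt f) := by
  funext p
  have hD : DifferentiableAt ℝ (fderiv ℝ f) p :=
    ((hf.fderiv_right (m := (⊤ : ℕ∞)) (by simp)).differentiable (by simp)) p
  have e1 : pt (px f) p = fderiv ℝ (fderiv ℝ f) p ((1:ℝ),(0:ℝ)) ((0:ℝ),(1:ℝ)) := by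
    rw [pt_eq (smooth_px hf) p]
    have h2 : px f =
        ⇑(ContinuousLinearMap.apply ℝ (Quaternion ℝ) ((0:ℝ),(1:ℝ))) ∘ fderiv ℝ f :=
      funext (px_eq hf)
    rw [h2, (((ContinuousLinearMap.apply ℝ (Quaternion ℝ)
      ((0:ℝ),(1:ℝ))).hasFDerivAt).comp p hD.hasFDerivAt).fderiv]
    rfl
  have e2 : px (pt f) p = fderiv ℝ (fderiv ℝ f) p ((0:ℝ),(1:ℝ)) ((1:ℝ),(0:ℝ)) := by
    rw [px_eq (smooth_pt hf) p]
    have h2 : pt f =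
        ⇑(ContinuousLinearMap.apply ℝ (Quaternion ℝ) ((1:ℝ),(0:ℝ))) ∘ fderiv ℝ f :=
      funext (pt_eq hf)
    rw [h2, (((ContinuousLinearMap.apply ℝ (Quaternion ℝ)
      ((1:ℝ),(0:ℝ))).hasFDerivAt).comp p hD.hasFDerivAt).fderiv]
    rfl
  rw [e1, e2, (hf.contDiffAt.isSymmSndFDerivAt (by rw [minSmoothness_of_isRCLikeNormedField]; exact WithTop.coe_le_coe.mpr le_top)).eq]

lemma px_add (hf : ContDiff ℝ (⊤ : ℕ∞) f) (hg : ContDiff ℝ (⊤ : ℕ∞) g) :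
    px (fun q => f q + g q) = fun q => px f q + px g q := by
  funext p; simp only [px]
  exact deriv_add (slice_x hf p).differentiableAt (slice_x hg p).differentiableAt

lemma px_smul (c : ℝ) (hf : ContDiff ℝ (⊤ : ℕ∞) f) :
    px (fun q => c • f q) = fun q => c • px f q := by
  funext p; simp only [px]
  exact deriv_const_smul c (slice_x hf p).differentiableAt

lemma px_mul (hf : ContDiff ℝ (⊤ : ℕ∞) f) (hg : ContDiff ℝ (⊤ : ℕ∞) g) :
    px (fun q => f q * g q) = fun q => px f q * g q + f q * px g q := by
  funext p; simp only [px]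
  exact deriv_mul (slice_x hf p).differentiableAt (slice_x hg p).differentiableAt

lemma pt_add (hf : ContDiff ℝ (⊤ : ℕ∞) f) (hg : ContDiff ℝ (⊤ : ℕ∞) g) :
    pt (fun q => f q + g q) = fun q => pt f q + pt g q := by
  funext p; simp only [pt]
  exact deriv_add (slice_t hf p).differentiableAt (slice_t hg p).differentiableAt

lemma pt_smul (c : ℝ) (hf : ContDiff ℝ (⊤ : ℕ∞) f) :
    pt (fun q => c • f q) = fun q => c • pt f q := by
  funext p; simp only [pt]
  exact deriv_const_smul c (slice_t hf p).differentiableAt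

lemma pt_mul (hf : ContDiff ℝ (⊤ : ℕ∞) f) (hg : ContDiff ℝ (⊤ : ℕ∞) g) :
    pt (fun q => f q * g q) = fun q => pt f q * g q + f q * pt g q := by
  funext p; simp only [pt]
  exact deriv_mul (slice_t hf p).differentiableAt (slice_t hg p).differentiableAt

end PKdV

set_option maxHeartbeats 2000000

/-- Right-multiplication Lax pair for the quaternion potential KdV equation
`uₜ = σ uₓ² + uₓₓₓ`. -/
theorem pkdv_lax_right (σ : ℝ) (hσ : σ ^ 2 = 1) (u ψ φ : ℝ × ℝ → Quaternion ℝ)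
    (hu : ContDiff ℝ (⊤ : ℕ∞) u) (hψ : ContDiff ℝ (⊤ : ℕ∞) ψ)
    (hut : ∀ p, pt u p = σ • (px u p) ^ 2 + px (px (px u)) p)
    (hψt : ∀ p, pt ψ p = (4 : ℝ) • px (px (px ψ)) p + (2 * σ) • (px ψ p * px u p)
      + σ • (ψ p * px (px u) p))
    (hφ : φ = fun p => px (px ψ) p + (σ / 3) • (ψ p * px u p)) :
    ∀ p, pt φ p = (4 : ℝ) • px (px (px φ)) p + (2 * σ) • (px φ p * px u p)
      + σ • (φ p * px (px u) p) := by
  subst hφ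
  have hu1 : ContDiff ℝ (⊤ : ℕ∞) (px u) := PKdV.smooth_px hu
  have hu2 : ContDiff ℝ (⊤ : ℕ∞) (px (px u)) := PKdV.smooth_px hu1
  have hu3 : ContDiff ℝ (⊤ : ℕ∞) (px (px (px u))) := PKdV.smooth_px hu2
  have hu4 : ContDiff ℝ (⊤ : ℕ∞) (px (px (px (px u)))) := PKdV.smooth_px hu3
  have hψ1 : ContDiff ℝ (⊤ : ℕ∞) (px ψ) := PKdV.smooth_px hψ
  have hψ2 : ContDiff ℝ (⊤ : ℕ∞) (px (px ψ)) := PKdV.smooth_px hψ1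
  have hψ3 : ContDiff ℝ (⊤ : ℕ∞) (px (px (px ψ))) := PKdV.smooth_px hψ2
  have hψ4 : ContDiff ℝ (⊤ : ℕ∞) (px (px (px (px ψ)))) := PKdV.smooth_px hψ3
  have hψ5 : ContDiff ℝ (⊤ : ℕ∞) (px (px (px (px (px ψ))))) := PKdV.smooth_px hψ4
  have Hut : pt u = fun p => σ • (px u p * px u p) + px (px (px u)) p := by
    funext p; rw [hut p, pow_two]
  have Hψt : pt ψ = fun p =>
      (4:ℝ) • px (px (px ψ)) p + (2*σ) • (px ψ p * px u p) + σ • (ψ p * px (px u) p) :=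
    funext hψt
  have Cu : pt (px u) = px (pt u) := PKdV.pt_px_comm hu
  have Cψ2 : pt (px (px ψ)) = px (px (pt ψ)) := by
    rw [PKdV.pt_px_comm hψ1, PKdV.pt_px_comm hψ]
  intro p
  simp (disch := fun_prop) only [PKdV.pt_add, PKdV.pt_smul, PKdV.pt_mul, PKdV.px_add, PKdV.px_smul, PKdV.px_mul,
    Cψ2, Cu, Hut, Hψt]
  have hσ' : σ = 1 ∨ σ = -1 := by
    have h0 : (σ - 1) * (σ + 1) = 0 := by linear_combination hσ
    rcases mul_eq_zero.mp h0 with h | h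
    · exact Or.inl (by linarith)
    · exact Or.inr (by linarith)
  rcases hσ' with h | h <;> subst h <;>
    simp only [smul_add, mul_add, add_mul, smul_mul_assoc, mul_smul_comm, smul_smul,
      mul_assoc] <;> module
end

section
/- Let α, β ∈ ℝ and let u, ψ : ℝ × ℝ → ℍ be smooth with u_t = (β − 3α²)(u²*u_x + u_x*u²) + β u*u_x*u + u_xxx (the first quaternion mKdV family) and ψ_t = α(u_xx*ψ + ψ*u_xx) + α²([u,u_x]*ψ − ψ*[u,u_x]) + (β − 2α²)α(u³*ψ + ψ*u³). Then the function φ := ψ_x − α(u*ψ + ψ*u) satisfies φ_t = α(u_xx*φ + φ*u_xx) + α²([u,u_x]*φ − φ*[u,u_x]) + (β − 2α²)α(u³*φ + φ*u³). (Lax pair with K = L + R.) -/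
section aux

variable {f : ℝ × ℝ → Quaternion ℝ}

lemma aux_hx (hf : ContDiff ℝ (⊤ : ℕ∞) f) (p : ℝ × ℝ) :
    HasDerivAt (fun y => f (p.1, y)) (px f p) p.2 := by
  have h : Differentiable ℝ (fun y => f (p.1, y)) :=
    (hf.differentiable (by simp)).comp ((differentiable_const _).prodMk differentiable_id)
  exact (h p.2).hasDerivAt

lemma aux_ht (hf : ContDiff ℝ (⊤ : ℕ∞) f) (p : ℝ × ℝ) :
    HasDerivAt (fun s => f (s, p.2)) (pt f p) p.1 := by
  have h : Differentiable ℝ (fun s => f (s, p.2)) :=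
    (hf.differentiable (by simp)).comp (differentiable_id.prodMk (differentiable_const _))
  exact (h p.1).hasDerivAt

lemma aux_px_fderiv (hf : Differentiable ℝ f) (p : ℝ × ℝ) :
    px f p = fderiv ℝ f p ((0:ℝ), (1:ℝ)) := by
  have h1 : HasDerivAt (fun y : ℝ => ((p.1 : ℝ), y)) ((0:ℝ), (1:ℝ)) p.2 :=
    (hasDerivAt_const _ _).prodMk (hasDerivAt_id _)
  exact ((hf p).hasFDerivAt.comp_hasDerivAt p.2 h1).deriv

lemma aux_pt_fderiv (hf : Differentiable ℝ f) (p : ℝ × ℝ) :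
    pt f p = fderiv ℝ f p ((1:ℝ), (0:ℝ)) := by
  have h1 : HasDerivAt (fun s : ℝ => (s, p.2)) ((1:ℝ), (0:ℝ)) p.1 :=
    (hasDerivAt_id _).prodMk (hasDerivAt_const _ _)
  exact ((hf p).hasFDerivAt.comp_hasDerivAt p.1 h1).deriv

lemma aux_contDiff_px (hf : ContDiff ℝ (⊤ : ℕ∞) f) : ContDiff ℝ (⊤ : ℕ∞) (px f) := by
  have h : px f = fun p => fderiv ℝ f p ((0:ℝ), (1:ℝ)) :=
    funext fun p => aux_px_fderiv (hf.differentiable (by simp)) p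
  rw [h]
  exact (hf.fderiv_right (by simp)).clm_apply contDiff_const

lemma aux_pt_px (hf : ContDiff ℝ (⊤ : ℕ∞) f) (p : ℝ × ℝ) : pt (px f) p = px (pt f) p := by
  have hd : Differentiable ℝ f := hf.differentiable (by simp)
  have hd' : Differentiable ℝ (fun q => fderiv ℝ f q) :=
    (hf.fderiv_right (m := (⊤ : ℕ∞)) (by simp)).differentiable (by simp)
  have hsymm := second_derivative_symmetric (f'' := fderiv ℝ (fderiv ℝ f) p)
    (fun y => (hd y).hasFDerivAt) (hd' p).hasFDerivAt ((1:ℝ), (0:ℝ)) ((0:ℝ), (1:ℝ))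
  set L01 := ContinuousLinearMap.apply ℝ (Quaternion ℝ) (((0:ℝ), (1:ℝ)) : ℝ × ℝ)
  set L10 := ContinuousLinearMap.apply ℝ (Quaternion ℝ) (((1:ℝ), (0:ℝ)) : ℝ × ℝ)
  have h1 : ∀ q, HasFDerivAt (px f) ((L01.comp (fderiv ℝ (fderiv ℝ f) q))) q := by
    intro q
    have e1 : px f = fun r => L01 (fderiv ℝ f r) :=
      funext fun r => aux_px_fderiv hd r
    rw [e1]
    exact (L01.hasFDerivAt.comp q (hd' q).hasFDerivAt)
  have h2 : ∀ q, HasFDerivAt (pt f) ((L10.comp (fderiv ℝ (fderiv ℝ f) q))) q := by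
    intro q
    have e2 : pt f = fun r => L10 (fderiv ℝ f r) :=
      funext fun r => aux_pt_fderiv hd r
    rw [e2]
    exact (L10.hasFDerivAt.comp q (hd' q).hasFDerivAt)
  have d1 : Differentiable ℝ (px f) := fun q => (h1 q).differentiableAt
  have d2 : Differentiable ℝ (pt f) := fun q => (h2 q).differentiableAt
  calc pt (px f) p = fderiv ℝ (px f) p ((1:ℝ), (0:ℝ)) := aux_pt_fderiv d1 p
    _ = fderiv ℝ (fderiv ℝ f) p ((1:ℝ), (0:ℝ)) ((0:ℝ), (1:ℝ)) := by rw [(h1 p).fderiv]; rfl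
    _ = fderiv ℝ (fderiv ℝ f) p ((0:ℝ), (1:ℝ)) ((1:ℝ), (0:ℝ)) := hsymm
    _ = fderiv ℝ (pt f) p ((0:ℝ), (1:ℝ)) := by rw [(h2 p).fderiv]; rfl
    _ = px (pt f) p := (aux_px_fderiv d2 p).symm

end aux


lemma aux_alg {A : Type*} [Ring A] [Algebra ℝ A] (α β : ℝ) (U U1 U2 U3 P P1 : A) :
    (α • ((U3 * P + U2 * P1) + (P1 * U2 + P * U3))
      + (α * α) • ((((U1 * U1 + U * U2) - (U2 * U + U1 * U1)) * P
          + (U * U1 - U1 * U) * P1)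
        - (P1 * (U * U1 - U1 * U)
          + P * ((U1 * U1 + U * U2) - (U2 * U + U1 * U1))))
      + ((β - 2 * (α * α)) * α) • ((((U1 * U + U * U1) * U + U * U * U1) * P
            + U * U * U * P1)
        + (P1 * (U * U * U) + P * ((U1 * U + U * U1) * U + U * U * U1))))
    - α • (((((β - 3 * α ^ 2) • (U ^ 2 * U1 + U1 * U ^ 2) + β • (U * U1 * U) + U3)) * P
        + U * (α • (U2 * P + P * U2) + (α ^ 2) • ((U * U1 - U1 * U) * P - P * (U * U1 - U1 * U))
            + ((β - 2 * α ^ 2) * α) • (U ^ 3 * P + P * U ^ 3)))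
      + ((α • (U2 * P + P * U2) + (α ^ 2) • ((U * U1 - U1 * U) * P - P * (U * U1 - U1 * U))
            + ((β - 2 * α ^ 2) * α) • (U ^ 3 * P + P * U ^ 3)) * U
        + P * (((β - 3 * α ^ 2) • (U ^ 2 * U1 + U1 * U ^ 2) + β • (U * U1 * U) + U3))))
    = α • (U2 * (P1 - α • (U * P + P * U)) + (P1 - α • (U * P + P * U)) * U2)
      + (α ^ 2) • ((U * U1 - U1 * U) * (P1 - α • (U * P + P * U))
        - (P1 - α • (U * P + P * U)) * (U * U1 - U1 * U))
      + ((β - 2 * α ^ 2) * α) • (U ^ 3 * (P1 - α • (U * P + P * U))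
        + (P1 - α • (U * P + P * U)) * U ^ 3) := by
  simp only [smul_add, smul_sub, smul_smul]
  simp only [mul_add, add_mul, mul_sub, sub_mul, smul_mul_assoc, mul_smul_comm, smul_smul]
  simp only [mul_assoc, pow_succ, pow_zero, one_mul]
  match_scalars <;> ring

set_option maxHeartbeats 1000000 in
/-- Lax pair with `K = L + R` for the first quaternion mKdV family. -/
theorem mkdv1_lax_leftright (α β : ℝ) (u ψ φ : ℝ × ℝ → Quaternion ℝ)
    (hu : ContDiff ℝ (⊤ : ℕ∞) u) (hψ : ContDiff ℝ (⊤ : ℕ∞) ψ)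
    (hut : ∀ p, pt u p = (β - 3 * α ^ 2) • (u p ^ 2 * px u p + px u p * u p ^ 2)
      + β • (u p * px u p * u p) + px (px (px u)) p)
    (hψt : ∀ p, pt ψ p = α • (px (px u) p * ψ p + ψ p * px (px u) p)
      + (α ^ 2) • ((u p * px u p - px u p * u p) * ψ p
        - ψ p * (u p * px u p - px u p * u p))
      + ((β - 2 * α ^ 2) * α) • (u p ^ 3 * ψ p + ψ p * u p ^ 3))
    (hφ : φ = fun p => px ψ p - α • (u p * ψ p + ψ p * u p)) :
    ∀ p, pt φ p = α • (px (px u) p * φ p + φ p * px (px u) p)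
      + (α ^ 2) • ((u p * px u p - px u p * u p) * φ p
        - φ p * (u p * px u p - px u p * u p))
      + ((β - 2 * α ^ 2) * α) • (u p ^ 3 * φ p + φ p * u p ^ 3) := by
  subst hφ
  intro p
  have hu1 : ContDiff ℝ (⊤ : ℕ∞) (px u) := aux_contDiff_px hu
  have hu2 : ContDiff ℝ (⊤ : ℕ∞) (px (px u)) := aux_contDiff_px hu1
  have hψ1 : ContDiff ℝ (⊤ : ℕ∞) (px ψ) := aux_contDiff_px hψ
  -- t-derivative of φ
  have Hφt : pt (fun q => px ψ q - α • (u q * ψ q + ψ q * u q)) p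
      = pt (px ψ) p - α • ((pt u p * ψ p + u p * pt ψ p)
          + (pt ψ p * u p + ψ p * pt u p)) := by
    have h := (aux_ht hψ1 p).sub
      ((((aux_ht hu p).mul (aux_ht hψ p)).add
        ((aux_ht hψ p).mul (aux_ht hu p))).const_smul α)
    exact h.deriv
  have Hcomm : pt (px ψ) p = px (pt ψ) p := aux_pt_px hψ p
  -- rewrite pt ψ with powers expanded
  have Hpt : pt ψ = fun q => α • (px (px u) q * ψ q + ψ q * px (px u) q)
      + (α * α) • ((u q * px u q - px u q * u q) * ψ q
        - ψ q * (u q * px u q - px u q * u q))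
      + ((β - 2 * (α * α)) * α) • (u q * u q * u q * ψ q + ψ q * (u q * u q * u q)) := by
    funext q
    rw [hψt q]
    simp only [pow_succ, pow_zero, one_mul]
  -- x-derivative of pt ψ
  have Hx : px (pt ψ) p
      = α • ((px (px (px u)) p * ψ p + px (px u) p * px ψ p)
          + (px ψ p * px (px u) p + ψ p * px (px (px u)) p))
      + (α * α) • ((((px u p * px u p + u p * px (px u) p)
            - (px (px u) p * u p + px u p * px u p)) * ψ p
          + (u p * px u p - px u p * u p) * px ψ p)
        - (px ψ p * (u p * px u p - px u p * u p)
          + ψ p * ((px u p * px u p + u p * px (px u) p)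
            - (px (px u) p * u p + px u p * px u p))))
      + ((β - 2 * (α * α)) * α) • ((((px u p * u p + u p * px u p) * u p
            + u p * u p * px u p) * ψ p + u p * u p * u p * px ψ p)
        + (px ψ p * (u p * u p * u p)
          + ψ p * ((px u p * u p + u p * px u p) * u p + u p * u p * px u p))) := by
    rw [Hpt]
    have hU := aux_hx hu p
    have hU1 := aux_hx hu1 p
    have hU2 := aux_hx hu2 p
    have hΨ := aux_hx hψ p
    have h :=
      ((((hU2.mul hΨ).add (hΨ.mul hU2)).const_smul α).add
        (((((hU.mul hU1).sub (hU1.mul hU)).mul hΨ).sub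
          (hΨ.mul ((hU.mul hU1).sub (hU1.mul hU)))).const_smul (α * α))).add
      (((((hU.mul hU).mul hU).mul hΨ).add
        (hΨ.mul ((hU.mul hU).mul hU))).const_smul ((β - 2 * (α * α)) * α))
    exact h.deriv
  simp only [Hφt, Hcomm, Hx, hut p, hψt p]
  exact aux_alg α β (u p) (px u p) (px (px u) p) (px (px (px u)) p) (ψ p) (px ψ p)
end

section
/- Let α, β ∈ ℝ and let u, ψ : ℝ × ℝ → ℍ be smooth with u_t = (β − 6α²)(u²*u_x + u_x*u²) + β u*u_x*u + α[u,u_xx] + u_xxx (the second quaternion mKdV family) and ψ_t = α(u_xx*ψ + 2ψ*u_xx) + 2α²([u,u_x]*ψ − ψ*[u,u_x]) + (β − 4α²)α(u³*ψ + 2ψ*u³). Then the function φ := ψ_x − α(u*ψ + 2ψ*u) satisfies φ_t = α(u_xx*φ + 2φ*u_xx) + 2α²([u,u_x]*φ − φ*[u,u_x]) + (β − 4α²)α(u³*φ + 2φ*u³). (Lax pair with K = L + 2R.) -/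
namespace MkdvAux

variable {F : Type*} [NormedAddCommGroup F] [NormedSpace ℝ F]

noncomputable def Pt (f : ℝ × ℝ → F) : ℝ × ℝ → F := fun p => deriv (fun s => f (s, p.2)) p.1
noncomputable def Px (f : ℝ × ℝ → F) : ℝ × ℝ → F := fun p => deriv (fun y => f (p.1, y)) p.2

lemma pt_eq_Pt (f : ℝ × ℝ → Quaternion ℝ) : pt f = Pt f := rfl
lemma px_eq_Px (f : ℝ × ℝ → Quaternion ℝ) : px f = Px f := rfl

variable {f g : ℝ × ℝ → F}

lemma hasDerivAt_px (hf : ContDiff ℝ (⊤ : ℕ∞) f) (p : ℝ × ℝ) :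
    HasDerivAt (fun y => f (p.1, y)) (fderiv ℝ f p ((0:ℝ), (1:ℝ))) p.2 := by
  have h1 : HasFDerivAt f (fderiv ℝ f p) ((p.1, p.2) : ℝ × ℝ) := by
    simpa using (hf.differentiable (by simp) p).hasFDerivAt
  exact h1.comp_hasDerivAt p.2 (HasDerivAt.prodMk (hasDerivAt_const p.2 p.1) (hasDerivAt_id p.2))

lemma hasDerivAt_pt (hf : ContDiff ℝ (⊤ : ℕ∞) f) (p : ℝ × ℝ) :
    HasDerivAt (fun s => f (s, p.2)) (fderiv ℝ f p ((1:ℝ), (0:ℝ))) p.1 := by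
  have h1 : HasFDerivAt f (fderiv ℝ f p) ((p.1, p.2) : ℝ × ℝ) := by
    simpa using (hf.differentiable (by simp) p).hasFDerivAt
  exact h1.comp_hasDerivAt p.1 (HasDerivAt.prodMk (hasDerivAt_id p.1) (hasDerivAt_const p.1 p.2))

lemma Px_eq (hf : ContDiff ℝ (⊤ : ℕ∞) f) (p : ℝ × ℝ) : Px f p = fderiv ℝ f p ((0:ℝ), (1:ℝ)) :=
  (hasDerivAt_px hf p).deriv

lemma Pt_eq (hf : ContDiff ℝ (⊤ : ℕ∞) f) (p : ℝ × ℝ) : Pt f p = fderiv ℝ f p ((1:ℝ), (0:ℝ)) :=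
  (hasDerivAt_pt hf p).deriv

lemma contDiff_Px (hf : ContDiff ℝ (⊤ : ℕ∞) f) : ContDiff ℝ (⊤ : ℕ∞) (Px f) := by
  have h : Px f = fun p => (ContinuousLinearMap.apply ℝ F ((0:ℝ),(1:ℝ))) (fderiv ℝ f p) :=
    funext fun p => Px_eq hf p
  rw [h]
  exact (ContinuousLinearMap.apply ℝ F ((0:ℝ),(1:ℝ))).contDiff.comp (hf.fderiv_right (by simp))

lemma hasDerivAt_px' (hf : ContDiff ℝ (⊤ : ℕ∞) f) (p : ℝ × ℝ) :
    HasDerivAt (fun y => f (p.1, y)) (Px f p) p.2 := by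
  rw [Px_eq hf p]; exact hasDerivAt_px hf p

lemma hasDerivAt_pt' (hf : ContDiff ℝ (⊤ : ℕ∞) f) (p : ℝ × ℝ) :
    HasDerivAt (fun s => f (s, p.2)) (Pt f p) p.1 := by
  rw [Pt_eq hf p]; exact hasDerivAt_pt hf p

lemma Pt_Px_comm (hf : ContDiff ℝ (⊤ : ℕ∞) f) (p : ℝ × ℝ) : Pt (Px f) p = Px (Pt f) p := by
  set f' := fderiv ℝ f with hf'def
  have hf' : ContDiff ℝ (⊤ : ℕ∞) f' := hf.fderiv_right (by simp)
  have hsymm := second_derivative_symmetric (f := f) (f' := f') (f'' := fderiv ℝ f' p)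
    (fun y => (hf.differentiable (by simp) y).hasFDerivAt)
    ((hf'.differentiable (by simp) p).hasFDerivAt)
  have h1 : Pt (Px f) p = fderiv ℝ f' p ((1:ℝ),(0:ℝ)) ((0:ℝ),(1:ℝ)) := by
    have e : (fun s => Px f (s, p.2)) = fun s =>
        (ContinuousLinearMap.apply ℝ F ((0:ℝ),(1:ℝ))) (f' (s, p.2)) := by
      funext s; exact Px_eq hf (s, p.2)
    have hd : HasDerivAt (fun s =>
        (ContinuousLinearMap.apply ℝ F ((0:ℝ),(1:ℝ))) (f' (s, p.2)))
        ((ContinuousLinearMap.apply ℝ F ((0:ℝ),(1:ℝ))) (fderiv ℝ f' p ((1:ℝ),(0:ℝ)))) p.1 :=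
      (ContinuousLinearMap.apply ℝ F ((0:ℝ),(1:ℝ))).hasFDerivAt.comp_hasDerivAt p.1
        (hasDerivAt_pt hf' p)
    show deriv (fun s => Px f (s, p.2)) p.1 = _
    rw [e, hd.deriv]; rfl
  have h2 : Px (Pt f) p = fderiv ℝ f' p ((0:ℝ),(1:ℝ)) ((1:ℝ),(0:ℝ)) := by
    have e : (fun y => Pt f (p.1, y)) = fun y =>
        (ContinuousLinearMap.apply ℝ F ((1:ℝ),(0:ℝ))) (f' (p.1, y)) := by
      funext y; exact Pt_eq hf (p.1, y)
    have hd : HasDerivAt (fun y =>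
        (ContinuousLinearMap.apply ℝ F ((1:ℝ),(0:ℝ))) (f' (p.1, y)))
        ((ContinuousLinearMap.apply ℝ F ((1:ℝ),(0:ℝ))) (fderiv ℝ f' p ((0:ℝ),(1:ℝ)))) p.2 :=
      (ContinuousLinearMap.apply ℝ F ((1:ℝ),(0:ℝ))).hasFDerivAt.comp_hasDerivAt p.2
        (hasDerivAt_px hf' p)
    show deriv (fun y => Pt f (p.1, y)) p.2 = _
    rw [e, hd.deriv]; rfl
  rw [h1, h2, hsymm]

end MkdvAux

set_option maxHeartbeats 1000000 in
lemma mkdv_alg (α β : ℝ) (w0 w1 w2 w3 w4 w5 w6 w7 w8 w9 w10 w11 w12 w13 w14 w15 w16 w17 w18 w19 w20 w21 w22 w23 w24 w25 w26 w27 w28 w29 w30 w31 : Quaternion ℝ) :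
    α • w19 + α • w18 + ((α * 2) • w31 + (α * 2) • w27) + ((2 * (α * α)) • w15 + (2 * (α * α)) • w7 - ((2 * (α * α)) • w16 + (2 * (α * α)) • w15) + ((2 * (α * α)) • w6 - (2 * (α * α)) • w14) - ((2 * (α * α)) • w29 - (2 * (α * α)) • w30 + ((2 * (α * α)) • w25 + (2 * (α * α)) • w23 - ((2 * (α * α)) • w26 + (2 * (α * α)) • w25)))) + ((β * α - 4 * (α * (α * α))) • w12 + (β * α - 4 * (α * (α * α))) • w4 + (β * α - 4 * (α * (α * α))) • w3 + (β * α - 4 * (α * (α * α))) • w2 + ((β * (α * 2) - 4 * (α * (α * (α * 2)))) • w28 + ((β * (α * 2) - 4 * (α * (α * (α * 2)))) • w24 + (β * (α * 2) - 4 * (α * (α * (α * 2)))) • w22 + (β * (α * 2) - 4 * (α * (α * (α * 2)))) • w21))) - ((α * β - α * (6 * (α * α))) • w3 + (α * β - α * (6 * (α * α))) • w12 + (α * β) • w4 + ((α * α) • w7 - (α * α) • w16) + α • w19 + ((α * α) • w7 + (α * (α * 2)) • w11 + ((α * (2 * (α * α))) • w3 - (α * (2 * (α * α))) • w4 - ((α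 * (2 * (α * α))) • w9 - (α * (2 * (α * α))) • w10)) + ((α * (β * α) - α * (4 * (α * (α * α)))) • w0 + (α * (β * (α * 2)) - α * (4 * (α * (α * (α * 2))))) • w8)) + ((α * (2 * α)) • w17 + (α * (2 * (α * 2))) • w26 + ((α * (2 * (2 * (α * α)))) • w5 - (α * (2 * (2 * (α * α)))) • w13 - ((α * (2 * (2 * (α * α)))) • w22 - (α * (2 * (2 * (α * α)))) • w24)) + ((α * (2 * (β * α)) - α * (2 * (4 * (α * (α * α))))) • w1 + (α * (2 * (β * (α * 2))) - α * (2 * (4 * (α * (α * (α * 2)))))) • w20) + ((α * (2 * β) - α * (2 * (6 * (α * α)))) • w21 + (α * (2 * β) - α * (2 * (6 * (α * α)))) • w24 + (α * (2 * β)) • w22 + ((α * (2 * α)) • w23 - (α * (2 * α)) • w26) + (α * 2) • w27))) = α • w18 - ((α * α) • w16 + (α * (α * 2)) • w17) + ((α * 2) • w31 - ((α * (2 * α)) • w11 + (α * (2 * (α * 2))) • w23)) + ((2 * (α * α)) • w6 - (2 * (α * α)) • w14 - ((2 * (α * (α * α))) • w4 - (2 * (α * (α * α))) • w12 + ((2 *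 (α * (α * (α * 2)))) • w5 - (2 * (α * (α * (α * 2)))) • w13)) - ((2 * (α * α)) • w29 - ((2 * (α * (α * α))) • w9 + (2 * (α * (α * (α * 2)))) • w21) - ((2 * (α * α)) • w30 - ((2 * (α * (α * α))) • w10 + (2 * (α * (α * (α * 2)))) • w22)))) + ((β * α - 4 * (α * (α * α))) • w2 - ((β * (α * α) - 4 * (α * (α * (α * α)))) • w0 + (β * (α * (α * 2)) - 4 * (α * (α * (α * (α * 2))))) • w1) + ((β * (α * 2) - 4 * (α * (α * (α * 2)))) • w28 - ((β * (α * (2 * α)) - 4 * (α * (α * (α * (2 * α))))) • w8 + (β * (α * (2 * (α * 2))) - 4 * (α * (α * (α * (2 * (α * 2)))))) • w20))) := by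
  match_scalars <;> ring


set_option maxHeartbeats 8000000 in
open MkdvAux in
/-- Lax pair with `K = L + 2R` for the second quaternion mKdV family. -/
theorem mkdv2_lax_L2R (α β : ℝ) (u ψ φ : ℝ × ℝ → Quaternion ℝ)
    (hu : ContDiff ℝ (⊤ : ℕ∞) u) (hψ : ContDiff ℝ (⊤ : ℕ∞) ψ)
    (hut : ∀ p, pt u p = (β - 6 * α ^ 2) • (u p ^ 2 * px u p + px u p * u p ^ 2)
      + β • (u p * px u p * u p)
      + α • (u p * px (px u) p - px (px u) p * u p) + px (px (px u)) p)
    (hψt : ∀ p, pt ψ p = α • (px (px u) p * ψ p + (2 : ℝ) • (ψ p * px (px u) p))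
      + (2 * α ^ 2) • ((u p * px u p - px u p * u p) * ψ p
        - ψ p * (u p * px u p - px u p * u p))
      + ((β - 4 * α ^ 2) * α) • (u p ^ 3 * ψ p + (2 : ℝ) • (ψ p * u p ^ 3)))
    (hφ : φ = fun p => px ψ p - α • (u p * ψ p + (2 : ℝ) • (ψ p * u p))) :
    ∀ p, pt φ p = α • (px (px u) p * φ p + (2 : ℝ) • (φ p * px (px u) p))
      + (2 * α ^ 2) • ((u p * px u p - px u p * u p) * φ p
        - φ p * (u p * px u p - px u p * u p))
      + ((β - 4 * α ^ 2) * α) • (u p ^ 3 * φ p + (2 : ℝ) • (φ p * u p ^ 3)) := by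
  intro p
  subst hφ
  simp only [px_eq_Px, pt_eq_Pt, pow_two, pow_three'] at hut hψt ⊢
  have hux := contDiff_Px hu
  have huxx := contDiff_Px hux
  have hψx := contDiff_Px hψ
  have hTu := hasDerivAt_pt' hu p
  have hTψ := hasDerivAt_pt' hψ p
  have hTψx := hasDerivAt_pt' hψx p
  have hXu := hasDerivAt_px' hu p
  have hXux := hasDerivAt_px' hux p
  have hXuxx := hasDerivAt_px' huxx p
  have hXψ := hasDerivAt_px' hψ p
  have e1 : Pt (fun q => Px ψ q - α • (u q * ψ q + (2:ℝ) • (ψ q * u q))) p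
      = Pt (Px ψ) p - α • ((Pt u p * ψ p + u p * Pt ψ p)
          + (2:ℝ) • (Pt ψ p * u p + ψ p * Pt u p)) :=
    (hTψx.sub (((hTu.mul hTψ).add ((hTψ.mul hTu).const_smul (2:ℝ))).const_smul α)).deriv
  have ePtψ : Pt ψ = fun q => α • (Px (Px u) q * ψ q + (2:ℝ) • (ψ q * Px (Px u) q))
      + (2 * (α * α)) • ((u q * Px u q - Px u q * u q) * ψ q
        - ψ q * (u q * Px u q - Px u q * u q))
      + ((β - 4 * (α * α)) * α) • (u q * u q * u q * ψ q
        + (2:ℝ) • (ψ q * (u q * u q * u q))) := funext hψt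
  have e2 : Px (Pt ψ) p =
      α • ((Px (Px (Px u)) p * ψ p + Px (Px u) p * Px ψ p)
        + (2:ℝ) • (Px ψ p * Px (Px u) p + ψ p * Px (Px (Px u)) p))
      + (2 * (α * α)) • ((((Px u p * Px u p + u p * Px (Px u) p)
            - (Px (Px u) p * u p + Px u p * Px u p)) * ψ p
          + (u p * Px u p - Px u p * u p) * Px ψ p)
        - (Px ψ p * (u p * Px u p - Px u p * u p)
          + ψ p * ((Px u p * Px u p + u p * Px (Px u) p)
            - (Px (Px u) p * u p + Px u p * Px u p))))
      + ((β - 4 * (α * α)) * α) • ((((Px u p * u p + u p * Px u p) * u p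
            + u p * u p * Px u p) * ψ p + u p * u p * u p * Px ψ p)
        + (2:ℝ) • (Px ψ p * (u p * u p * u p)
          + ψ p * ((Px u p * u p + u p * Px u p) * u p + u p * u p * Px u p))) := by
    rw [ePtψ]
    exact ((((hXuxx.mul hXψ).add ((hXψ.mul hXuxx).const_smul (2:ℝ))).const_smul α).add
      (((((hXu.mul hXux).sub (hXux.mul hXu)).mul hXψ).sub
        (hXψ.mul ((hXu.mul hXux).sub (hXux.mul hXu)))).const_smul (2 * (α * α)))).add
      (((((hXu.mul hXu).mul hXu).mul hXψ).add
        ((hXψ.mul ((hXu.mul hXu).mul hXu)).const_smul (2:ℝ))).const_smul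
          ((β - 4 * (α * α)) * α)) |>.deriv
  rw [e1, Pt_Px_comm hψ p, e2, hut p, hψt p]
  set a := u p with ha
  set b := Px u p with hb
  set c := Px (Px u) p with hc
  set d := Px (Px (Px u)) p with hd
  set e := ψ p with he
  set f := Px ψ p with hf
  clear_value a b c d e f
  clear ha hb hc hd he hf e1 e2 ePtψ hut hψt hTu hTψ hTψx hXu hXux hXuxx hXψ hu hψ hux huxx hψx
  simp only [smul_add, smul_sub, smul_smul, mul_add, add_mul, mul_sub, sub_mul,
    smul_mul_assoc, mul_smul_comm, mul_assoc]
  exact mkdv_alg α β (a * (a * (a * (a * e)))) (a * (a * (a * (e * a)))) (a * (a * (a * f))) (a * (a * (b * e))) (a * (b * (a * e))) (a * (b * (e * a))) (a * (b * f)) (a * (c * e)) (a * (e * (a * (a * a)))) (a * (e * (a * b))) (a * (e * (b * a))) (a * (e * c)) (b * (a * (a * e))) (b * (a * (e * a))) (b * (a * f)) (b * (b * e)) (c * (a * e)) (c * (e * a)) (c * f) (d * e) (e * (a * (a * (a * a)))) (e * (a * (a * b))) (e * (a * (b * a))) (e * (a * c)) (e * (b * (a * a))) (e * (b * b)) (e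 * (c * a)) (e * d) (f * (a * (a * a))) (f * (a * b)) (f * (b * a)) (f * c)
end

section
/- Let α, β ∈ ℝ and let u, ψ : ℝ × ℝ → ℍ be smooth with u_t = (β − 6α²)(u²*u_x + u_x*u²) + β u*u_x*u + α[u,u_xx] + u_xxx (the second quaternion mKdV family) and ψ_t = −α(2u_xx*ψ + ψ*u_xx) + 2α²([u,u_x]*ψ − ψ*[u,u_x]) − (β − 4α²)α(2u³*ψ + ψ*u³). Then the function φ := ψ_x + α(2u*ψ + ψ*u) satisfies φ_t = −α(2u_xx*φ + φ*u_xx) + 2α²([u,u_x]*φ − φ*[u,u_x]) − (β − 4α²)α(2u³*φ + φ*u³). (Lax pair with K = −2L − R.) -/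
noncomputable def Pd (v : ℝ × ℝ) (f : ℝ × ℝ → Quaternion ℝ) : ℝ × ℝ → Quaternion ℝ :=
  fun p => fderiv ℝ f p v

@[fun_prop]
lemma ContDiff.pd {f : ℝ × ℝ → Quaternion ℝ} (hf : ContDiff ℝ (⊤ : ℕ∞) f) (v : ℝ × ℝ) :
    ContDiff ℝ (⊤ : ℕ∞) (Pd v f) := by
  have h : Pd v f = fun p => (ContinuousLinearMap.apply ℝ (Quaternion ℝ) v) (fderiv ℝ f p) := rfl
  rw [h]
  exact (ContinuousLinearMap.apply ℝ (Quaternion ℝ) v).contDiff.comp (hf.fderiv_right (by simp))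

lemma px_eq_s13 {f : ℝ × ℝ → Quaternion ℝ} (hf : ContDiff ℝ (⊤ : ℕ∞) f) : px f = Pd (0, 1) f := by
  funext p
  have h1 : HasFDerivAt (fun y : ℝ => ((p.1, y) : ℝ × ℝ)) (ContinuousLinearMap.inr ℝ ℝ ℝ) p.2 :=
    hasFDerivAt_prodMk_right p.1 p.2
  have h2 : HasFDerivAt f (fderiv ℝ f (p.1, p.2)) (p.1, p.2) :=
    (hf.differentiable (by simp) (p.1, p.2)).hasFDerivAt
  have h3 := (h2.comp p.2 h1).hasDerivAt
  simpa [px, Pd, Function.comp_def] using h3.deriv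

lemma pt_eq_s13 {f : ℝ × ℝ → Quaternion ℝ} (hf : ContDiff ℝ (⊤ : ℕ∞) f) : pt f = Pd (1, 0) f := by
  funext p
  have h1 : HasFDerivAt (fun s : ℝ => ((s, p.2) : ℝ × ℝ)) (ContinuousLinearMap.inl ℝ ℝ ℝ) p.1 :=
    hasFDerivAt_prodMk_left p.1 p.2
  have h2 : HasFDerivAt f (fderiv ℝ f (p.1, p.2)) (p.1, p.2) :=
    (hf.differentiable (by simp) (p.1, p.2)).hasFDerivAt
  have h3 := (h2.comp p.1 h1).hasDerivAt
  simpa [pt, Pd, Function.comp_def] using h3.deriv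

lemma Pd_swap {f : ℝ × ℝ → Quaternion ℝ} (hf : ContDiff ℝ (⊤ : ℕ∞) f) (v w : ℝ × ℝ) (p : ℝ × ℝ) :
    Pd v (Pd w f) p = Pd w (Pd v f) p := by
  have hd : ∀ q, HasFDerivAt f (fderiv ℝ f q) q := fun q =>
    (hf.differentiable (by simp) q).hasFDerivAt
  have hf' : ContDiff ℝ (⊤ : ℕ∞) (fderiv ℝ f) := hf.fderiv_right (by simp)
  have h2 : HasFDerivAt (fderiv ℝ f) (fderiv ℝ (fderiv ℝ f) p) p :=
    (hf'.differentiable (by simp) p).hasFDerivAt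
  have key : ∀ a b : ℝ × ℝ, Pd a (Pd b f) p = fderiv ℝ (fderiv ℝ f) p a b := by
    intro a b
    have h4 : HasFDerivAt (Pd b f)
        ((ContinuousLinearMap.apply ℝ (Quaternion ℝ) b).comp (fderiv ℝ (fderiv ℝ f) p)) p :=
      ((ContinuousLinearMap.apply ℝ (Quaternion ℝ) b).hasFDerivAt).comp p h2
    simp [Pd, h4.fderiv]
  rw [key, key, second_derivative_symmetric hd h2 v w]

lemma Pd_add {f g : ℝ × ℝ → Quaternion ℝ} (hf : ContDiff ℝ (⊤ : ℕ∞) f) (hg : ContDiff ℝ (⊤ : ℕ∞) g)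
    (v p : ℝ × ℝ) : Pd v (fun q => f q + g q) p = Pd v f p + Pd v g p := by
  simp [Pd, fderiv_fun_add (hf.differentiable (by simp) p) (hg.differentiable (by simp) p)]

lemma Pd_sub {f g : ℝ × ℝ → Quaternion ℝ} (hf : ContDiff ℝ (⊤ : ℕ∞) f) (hg : ContDiff ℝ (⊤ : ℕ∞) g)
    (v p : ℝ × ℝ) : Pd v (fun q => f q - g q) p = Pd v f p - Pd v g p := by
  simp [Pd, fderiv_fun_sub (hf.differentiable (by simp) p) (hg.differentiable (by simp) p)]

lemma Pd_smul {f : ℝ × ℝ → Quaternion ℝ} (hf : ContDiff ℝ (⊤ : ℕ∞) f) (c : ℝ)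
    (v p : ℝ × ℝ) : Pd v (fun q => c • f q) p = c • Pd v f p := by
  simp [Pd, fderiv_fun_const_smul (hf.differentiable (by simp) p) c]

lemma Pd_mul {f g : ℝ × ℝ → Quaternion ℝ} (hf : ContDiff ℝ (⊤ : ℕ∞) f) (hg : ContDiff ℝ (⊤ : ℕ∞) g)
    (v p : ℝ × ℝ) : Pd v (fun q => f q * g q) p = Pd v f p * g p + f p * Pd v g p := by
  have h : HasFDerivAt (fun q => f q * g q) _ p := ((hf.differentiable (by simp) p).hasFDerivAt.mul'
    (hg.differentiable (by simp) p).hasFDerivAt)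
  simp only [Pd, h.fderiv, ContinuousLinearMap.add_apply, ContinuousLinearMap.smul_apply,
    ContinuousLinearMap.smulRight_apply, smul_eq_mul, op_smul_eq_mul]
  rw [add_comm]

lemma key_alg {A : Type*} [Ring A] [Algebra ℝ A] (α β : ℝ) (a b c d s w : A) :
 (-α * 2) • (d * s) + (-α * 2) • (c * w) +
            (-α • (w * c) + -α • (s * d)) +
          ((2 * (α * α)) • (b * (b * s)) +
                  (2 * (α * α)) • (a * (c * s)) -
                ((2 * (α * α)) • (c * (a * s)) +
                  (2 * (α * α)) • (b * (b * s))) +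
              ((2 * (α * α)) • (a * (b * w)) -
                (2 * (α * α)) • (b * (a * w))) -
            ((2 * (α * α)) • (w * (a * b)) -
                (2 * (α * α)) • (w * (b * a)) +
              ((2 * (α * α)) • (s * (b * b)) +
                  (2 * (α * α)) • (s * (a * c)) -
                ((2 * (α * α)) • (s * (c * a)) +
                  (2 * (α * α)) • (s * (b * b)))))) -
        ((β * (α * 2) - 4 * (α * (α * (α * 2)))) • (b * (a * (a * s))) +
                (β * (α * 2) - 4 * (α * (α * (α * 2)))) • (a * (b * (a * s))) +
              (β * (α * 2) - 4 * (α * (α * (α * 2)))) • (a * (a * (b * s))) +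
            (β * (α * 2) - 4 * (α * (α * (α * 2)))) • (a * (a * (a * w))) +
          ((β * α - 4 * (α * (α * α))) • (w * (a * (a * a))) +
            ((β * α - 4 * (α * (α * α))) • (s * (b * (a * a))) +
                (β * α - 4 * (α * (α * α))) • (s * (a * (b * a))) +
              (β * α - 4 * (α * (α * α))) • (s * (a * (a * b)))))) +
      ((α * (2 * β) - α * (2 * (6 * (α * α)))) • (a * (a * (b * s))) +
                  (α * (2 * β) - α * (2 * (6 * (α * α)))) • (b * (a * (a * s))) +
                (α * (2 * β)) • (a * (b * (a * s))) +
              ((α * (2 * α)) • (a * (c * s)) -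
                (α * (2 * α)) • (c * (a * s))) +
            (α * 2) • (d * s) +
          ((α * (2 * (-α * 2))) • (a * (c * s)) +
                (α * (2 * -α)) • (a * (s * c)) +
              ((α * (2 * (2 * (α * α)))) • (a * (a * (b * s))) -
                  (α * (2 * (2 * (α * α)))) • (a * (b * (a * s))) -
                ((α * (2 * (2 * (α * α)))) • (a * (s * (a * b))) -
                  (α * (2 * (2 * (α * α)))) • (a * (s * (b * a))))) -
            ((α * (2 * (β * (α * 2))) - α * (2 * (4 * (α * (α * (α * 2)))))) • (a * (a * (a * (a * s)))) +
              (α * (2 * (β * α)) - α * (2 * (4 * (α * (α * α))))) • (a * (s * (a * (a * a)))))) +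
        ((α * (-α * 2)) • (c * (s * a)) +
                (α * -α) • (s * (c * a)) +
              ((α * (2 * (α * α))) • (a * (b * (s * a))) -
                  (α * (2 * (α * α))) • (b * (a * (s * a))) -
                ((α * (2 * (α * α))) • (s * (a * (b * a))) -
                  (α * (2 * (α * α))) • (s * (b * (a * a))))) -
            ((α * (β * (α * 2)) - α * (4 * (α * (α * (α * 2))))) • (a * (a * (a * (s * a)))) +
              (α * (β * α) - α * (4 * (α * (α * α)))) • (s * (a * (a * (a * a))))) +
          ((α * β - α * (6 * (α * α))) • (s * (a * (a * b))) +
                  (α * β - α * (6 * (α * α))) • (s * (b * (a * a))) +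
                (α * β) • (s * (a * (b * a))) +
              ((α * α) • (s * (a * c)) -
                (α * α) • (s * (c * a))) +
            α • (s * d)))) =
    (-α * 2) • (c * w) +
            ((-α * (2 * (α * 2))) • (c * (a * s)) +
              (-α * (2 * α)) • (c * (s * a))) +
          (-α • (w * c) +
            ((-α * (α * 2)) • (a * (s * c)) +
              (-α * α) • (s * (a * c)))) +
        ((2 * (α * α)) • (a * (b * w)) -
              (2 * (α * α)) • (b * (a * w)) +
            ((2 * (α * (α * (α * 2)))) • (a * (b * (a * s))) -
                (2 * (α * (α * (α * 2)))) • (b * (a * (a * s))) +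
              ((2 * (α * (α * α))) • (a * (b * (s * a))) -
                (2 * (α * (α * α))) • (b * (a * (s * a))))) -
          ((2 * (α * α)) • (w * (a * b)) +
              ((2 * (α * (α * (α * 2)))) • (a * (s * (a * b))) +
                (2 * (α * (α * α))) • (s * (a * (a * b)))) -
            ((2 * (α * α)) • (w * (b * a)) +
              ((2 * (α * (α * (α * 2)))) • (a * (s * (b * a))) +
                (2 * (α * (α * α))) • (s * (a * (b * a))))))) -
      ((β * (α * 2) - 4 * (α * (α * (α * 2)))) • (a * (a * (a * w))) +
          ((β * (α * (2 * (α * 2))) - 4 * (α * (α * (α * (2 * (α * 2)))))) • (a * (a * (a * (a * s)))) +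
            (β * (α * (2 * α)) - 4 * (α * (α * (α * (2 * α))))) • (a * (a * (a * (s * a))))) +
        ((β * α - 4 * (α * (α * α))) • (w * (a * (a * a))) +
          ((β * (α * (α * 2)) - 4 * (α * (α * (α * (α * 2))))) • (a * (s * (a * (a * a)))) +
            (β * (α * α) - 4 * (α * (α * (α * α)))) • (s * (a * (a * (a * a)))))))
 := by
  module

set_option maxHeartbeats 2000000 in
/-- Lax pair with `K = -2L - R` for the second quaternion mKdV family. -/
theorem mkdv2_lax_m2LmR (α β : ℝ) (u ψ φ : ℝ × ℝ → Quaternion ℝ)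
    (hu : ContDiff ℝ (⊤ : ℕ∞) u) (hψ : ContDiff ℝ (⊤ : ℕ∞) ψ)
    (hut : ∀ p, pt u p = (β - 6 * α ^ 2) • (u p ^ 2 * px u p + px u p * u p ^ 2)
      + β • (u p * px u p * u p)
      + α • (u p * px (px u) p - px (px u) p * u p) + px (px (px u)) p)
    (hψt : ∀ p, pt ψ p = (-α) • ((2 : ℝ) • (px (px u) p * ψ p) + ψ p * px (px u) p)
      + (2 * α ^ 2) • ((u p * px u p - px u p * u p) * ψ p
        - ψ p * (u p * px u p - px u p * u p))
      - ((β - 4 * α ^ 2) * α) • ((2 : ℝ) • (u p ^ 3 * ψ p) + ψ p * u p ^ 3))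
    (hφ : φ = fun p => px ψ p + α • ((2 : ℝ) • (u p * ψ p) + ψ p * u p)) :
    ∀ p, pt φ p = (-α) • ((2 : ℝ) • (px (px u) p * φ p) + φ p * px (px u) p)
      + (2 * α ^ 2) • ((u p * px u p - px u p * u p) * φ p
        - φ p * (u p * px u p - px u p * u p))
      - ((β - 4 * α ^ 2) * α) • ((2 : ℝ) • (u p ^ 3 * φ p) + φ p * u p ^ 3) := by
  have hu1 : ContDiff ℝ (⊤ : ℕ∞) (Pd (0,1) u) := hu.pd _
  have hu2 : ContDiff ℝ (⊤ : ℕ∞) (Pd (0,1) (Pd (0,1) u)) := hu1.pd _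
  have hpxu : px u = Pd (0,1) u := px_eq_s13 hu
  have hpxxu : px (px u) = Pd (0,1) (Pd (0,1) u) := by rw [hpxu]; exact px_eq_s13 hu1
  have hpxxxu : px (px (px u)) = Pd (0,1) (Pd (0,1) (Pd (0,1) u)) := by
    rw [hpxxu]; exact px_eq_s13 hu2
  have hpxψ : px ψ = Pd (0,1) ψ := px_eq_s13 hψ
  rw [hpxxxu, hpxxu, hpxu, pt_eq_s13 hu] at hut
  rw [hpxxu, hpxu, pt_eq_s13 hψ] at hψt
  rw [hpxψ] at hφ
  subst hφ
  simp only [hpxu, px_eq_s13 hu1, pow_succ, pow_zero, one_mul] at hut hψt ⊢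
  have hUfun : Pd (1,0) u = fun q =>
      (β - 6 * (α * α)) • (u q * u q * Pd (0,1) u q + Pd (0,1) u q * (u q * u q))
      + β • (u q * Pd (0,1) u q * u q)
      + α • (u q * Pd (0,1) (Pd (0,1) u) q - Pd (0,1) (Pd (0,1) u) q * u q)
      + Pd (0,1) (Pd (0,1) (Pd (0,1) u)) q := funext hut
  have hGfun : Pd (1,0) ψ = fun q =>
      (-α) • ((2 : ℝ) • (Pd (0,1) (Pd (0,1) u) q * ψ q) + ψ q * Pd (0,1) (Pd (0,1) u) q)
      + (2 * (α * α)) • ((u q * Pd (0,1) u q - Pd (0,1) u q * u q) * ψ q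
        - ψ q * (u q * Pd (0,1) u q - Pd (0,1) u q * u q))
      - ((β - 4 * (α * α)) * α) • ((2 : ℝ) • (u q * u q * u q * ψ q) + ψ q * (u q * u q * u q))
      := funext hψt
  intro p
  have hΦ : ContDiff ℝ (⊤ : ℕ∞) (fun q : ℝ × ℝ =>
      Pd (0,1) ψ q + α • ((2 : ℝ) • (u q * ψ q) + ψ q * u q)) := by fun_prop
  rw [pt_eq_s13 hΦ]
  simp (disch := fun_prop) only [Pd_add, Pd_sub, Pd_smul, Pd_mul]
  rw [Pd_swap hψ (1,0) (0,1) p, hUfun, hGfun]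
  simp (disch := fun_prop) only [Pd_add, Pd_sub, Pd_smul, Pd_mul]
  simp only [smul_add, smul_sub, smul_smul, mul_add, add_mul, sub_mul, mul_sub,
    smul_mul_assoc, mul_smul_comm, mul_assoc]
  exact key_alg α β (u p) (Pd (0,1) u p) (Pd (0,1) (Pd (0,1) u) p)
    (Pd (0,1) (Pd (0,1) (Pd (0,1) u)) p) (ψ p) (Pd (0,1) ψ p)
end

section
/- Let α, β ∈ ℝ and let u, ψ : ℝ × ℝ → ℍ be smooth with u_t = (β − 6α²)(u²*u_x + u_x*u²) + β u*u_x*u + α[u,u_xx] + u_xxx (the second quaternion mKdV family) and ψ_t = α[u_xx,ψ] + 2α²([u,u_x]*ψ − ψ*[u,u_x]) + (β − 4α²)α[u³,ψ]. Then the function φ := ψ_x − α[u,ψ] satisfies φ_t = α[u_xx,φ] + 2α²([u,u_x]*φ − φ*[u,u_x]) + (β − 4α²)α[u³,φ]. (Lax pair with K = L − R, i.e., commutator action.) -/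
namespace LaxAux

lemma slice_x (f : ℝ × ℝ → Quaternion ℝ) (hf : Differentiable ℝ f) (p : ℝ × ℝ) :
    HasDerivAt (fun y => f (p.1, y)) (px f p) p.2 := by
  have hl : HasDerivAt (fun y : ℝ => ((p.1 : ℝ), y)) ((0 : ℝ), (1 : ℝ)) p.2 :=
    (hasDerivAt_const _ _).prodMk (hasDerivAt_id _)
  have h := (hf p).hasFDerivAt.comp_hasDerivAt p.2 hl
  have h' : HasDerivAt (fun y => f (p.1, y)) (fderiv ℝ f p (0, 1)) p.2 := by
    simpa [Function.comp_def] using h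
  simpa [px, h'.deriv] using h'

lemma slice_t (f : ℝ × ℝ → Quaternion ℝ) (hf : Differentiable ℝ f) (p : ℝ × ℝ) :
    HasDerivAt (fun s => f (s, p.2)) (pt f p) p.1 := by
  have hl : HasDerivAt (fun s : ℝ => (s, (p.2 : ℝ))) ((1 : ℝ), (0 : ℝ)) p.1 :=
    (hasDerivAt_id _).prodMk (hasDerivAt_const _ _)
  have h := (hf p).hasFDerivAt.comp_hasDerivAt p.1 hl
  have h' : HasDerivAt (fun s => f (s, p.2)) (fderiv ℝ f p (1, 0)) p.1 := by
    simpa [Function.comp_def] using h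
  simpa [pt, h'.deriv] using h'

lemma px_eq (f : ℝ × ℝ → Quaternion ℝ) (hf : Differentiable ℝ f) :
    px f = fun p => fderiv ℝ f p (0, 1) := by
  funext p
  have hl : HasDerivAt (fun y : ℝ => ((p.1 : ℝ), y)) ((0 : ℝ), (1 : ℝ)) p.2 :=
    (hasDerivAt_const _ _).prodMk (hasDerivAt_id _)
  have h := (hf p).hasFDerivAt.comp_hasDerivAt p.2 hl
  exact HasDerivAt.deriv (by simpa [Function.comp_def] using h)

lemma pt_eq (f : ℝ × ℝ → Quaternion ℝ) (hf : Differentiable ℝ f) :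
    pt f = fun p => fderiv ℝ f p (1, 0) := by
  funext p
  have hl : HasDerivAt (fun s : ℝ => (s, (p.2 : ℝ))) ((1 : ℝ), (0 : ℝ)) p.1 :=
    (hasDerivAt_id _).prodMk (hasDerivAt_const _ _)
  have h := (hf p).hasFDerivAt.comp_hasDerivAt p.1 hl
  exact HasDerivAt.deriv (by simpa [Function.comp_def] using h)

lemma contDiff_px {f : ℝ × ℝ → Quaternion ℝ} (hf : ContDiff ℝ (⊤ : ℕ∞) f) : ContDiff ℝ (⊤ : ℕ∞) (px f) := by
  rw [px_eq f (hf.differentiable (by simp))]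
  exact (hf.fderiv_right (by simp)).clm_apply contDiff_const

lemma contDiff_pt {f : ℝ × ℝ → Quaternion ℝ} (hf : ContDiff ℝ (⊤ : ℕ∞) f) : ContDiff ℝ (⊤ : ℕ∞) (pt f) := by
  rw [pt_eq f (hf.differentiable (by simp))]
  exact (hf.fderiv_right (by simp)).clm_apply contDiff_const

lemma fderiv_apply_vec (f : ℝ × ℝ → Quaternion ℝ) (hf : ContDiff ℝ (⊤ : ℕ∞) f)
    (v w : ℝ × ℝ) (p : ℝ × ℝ) :
    fderiv ℝ (fun q => fderiv ℝ f q v) p w = fderiv ℝ (fderiv ℝ f) p w v := by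
  have h1 : DifferentiableAt ℝ (fderiv ℝ f) p :=
    ((hf.fderiv_right (m := (⊤ : ℕ∞)) (by simp)).differentiable (by simp)) p
  have h2 : HasFDerivAt (fun q => fderiv ℝ f q v)
      ((ContinuousLinearMap.apply ℝ (Quaternion ℝ) v).comp (fderiv ℝ (fderiv ℝ f) p)) p :=
    (ContinuousLinearMap.apply ℝ (Quaternion ℝ) v).hasFDerivAt.comp p h1.hasFDerivAt
  simpa using h2.fderiv ▸ rfl

lemma clairaut (f : ℝ × ℝ → Quaternion ℝ) (hf : ContDiff ℝ (⊤ : ℕ∞) f) (p : ℝ × ℝ) :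
    pt (px f) p = px (pt f) p := by
  have hd := hf.differentiable (by simp)
  have hdx : Differentiable ℝ (px f) := (contDiff_px hf).differentiable (by simp)
  have hdt : Differentiable ℝ (pt f) := (contDiff_pt hf).differentiable (by simp)
  rw [pt_eq _ hdx, px_eq _ hdt]
  simp only [px_eq f hd, pt_eq f hd]
  rw [fderiv_apply_vec f hf (0,1) (1,0) p, fderiv_apply_vec f hf (1,0) (0,1) p]
  exact second_derivative_symmetric (fun y => (hd y).hasFDerivAt)
    (((hf.fderiv_right (m := (⊤ : ℕ∞)) (by simp)).differentiable (by simp)) p).hasFDerivAt _ _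

end LaxAux

set_option maxHeartbeats 4000000 in
lemma key (A : Type*) [Ring A] [Algebra ℝ A] (α β : ℝ) (U Ux Uxx Uxxx P Px : A) :
    α • (Uxxx * P + Uxx * Px - (Px * Uxx + P * Uxxx)) +
          (2 * α ^ 2) •
            ((Ux * Ux + U * Uxx - (Uxx * U + Ux * Ux)) * P + (U * Ux - Ux * U) * Px -
              (Px * (U * Ux - Ux * U) + P * (Ux * Ux + U * Uxx - (Uxx * U + Ux * Ux)))) +
        ((β - 4 * α ^ 2) * α) •
          (((Ux * U + U * Ux) * U + U * U * Ux) * P + U * U * U * Px -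
            (Px * (U * U * U) + P * ((Ux * U + U * Ux) * U + U * U * Ux))) -
      α •
        (((β - 6 * α ^ 2) • (U ^ 2 * Ux + Ux * U ^ 2) + β • (U * Ux * U) + α • (U * Uxx - Uxx * U) + Uxxx) * P +
            U *
              (α • (Uxx * P - P * Uxx) + (2 * α ^ 2) • ((U * Ux - Ux * U) * P - P * (U * Ux - Ux * U)) +
                ((β - 4 * α ^ 2) * α) • (U ^ 3 * P - P * U ^ 3)) -
          ((α • (Uxx * P - P * Uxx) + (2 * α ^ 2) • ((U * Ux - Ux * U) * P - P * (U * Ux - Ux * U)) +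
                ((β - 4 * α ^ 2) * α) • (U ^ 3 * P - P * U ^ 3)) *
              U +
            P * ((β - 6 * α ^ 2) • (U ^ 2 * Ux + Ux * U ^ 2) + β • (U * Ux * U) + α • (U * Uxx - Uxx * U) + Uxxx))) =
    α • (Uxx * (Px - α • (U * P - P * U)) - (Px - α • (U * P - P * U)) * Uxx) +
        (2 * α ^ 2) •
          ((U * Ux - Ux * U) * (Px - α • (U * P - P * U)) - (Px - α • (U * P - P * U)) * (U * Ux - Ux * U)) +
      ((β - 4 * α ^ 2) * α) • (U ^ 3 * (Px - α • (U * P - P * U)) - (Px - α • (U * P - P * U)) * U ^ 3) := by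
  simp only [pow_succ, pow_zero, one_mul, mul_add, add_mul, mul_sub, sub_mul,
    smul_add, smul_sub, smul_smul, smul_mul_assoc, mul_smul_comm, mul_assoc]
  module

set_option maxHeartbeats 400000 in
open LaxAux in
/-- Lax pair with `K = L - R` (commutator action) for the second quaternion
mKdV family. -/
theorem mkdv2_lax_comm (α β : ℝ) (u ψ φ : ℝ × ℝ → Quaternion ℝ)
    (hu : ContDiff ℝ (⊤ : ℕ∞) u) (hψ : ContDiff ℝ (⊤ : ℕ∞) ψ)
    (hut : ∀ p, pt u p = (β - 6 * α ^ 2) • (u p ^ 2 * px u p + px u p * u p ^ 2)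
      + β • (u p * px u p * u p)
      + α • (u p * px (px u) p - px (px u) p * u p) + px (px (px u)) p)
    (hψt : ∀ p, pt ψ p = α • (px (px u) p * ψ p - ψ p * px (px u) p)
      + (2 * α ^ 2) • ((u p * px u p - px u p * u p) * ψ p
        - ψ p * (u p * px u p - px u p * u p))
      + ((β - 4 * α ^ 2) * α) • (u p ^ 3 * ψ p - ψ p * u p ^ 3))
    (hφ : φ = fun p => px ψ p - α • (u p * ψ p - ψ p * u p)) :
    ∀ p, pt φ p = α • (px (px u) p * φ p - φ p * px (px u) p)
      + (2 * α ^ 2) • ((u p * px u p - px u p * u p) * φ p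
        - φ p * (u p * px u p - px u p * u p))
      + ((β - 4 * α ^ 2) * α) • (u p ^ 3 * φ p - φ p * u p ^ 3) := by
  intro p
  have hud : Differentiable ℝ u := hu.differentiable (by simp)
  have hψd : Differentiable ℝ ψ := hψ.differentiable (by simp)
  have hdux : Differentiable ℝ (px u) := (contDiff_px hu).differentiable (by simp)
  have hduxx : Differentiable ℝ (px (px u)) :=
    (contDiff_px (contDiff_px hu)).differentiable (by simp)
  have hdψx : Differentiable ℝ (px ψ) := (contDiff_px hψ).differentiable (by simp)
  -- t-derivative of φ
  have tu := slice_t u hud p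
  have tψ := slice_t ψ hψd p
  have tψx := slice_t (px ψ) hdψx p
  have At := tψx.sub (((tu.mul tψ).sub (tψ.mul tu)).const_smul α)
  have hevt : (fun s => φ (s, p.2)) =ᶠ[nhds p.1]
      (fun s => px ψ (s, p.2) - α • (u (s, p.2) * ψ (s, p.2) - ψ (s, p.2) * u (s, p.2))) :=
    Filter.Eventually.of_forall fun s => by rw [hφ]
  have h1 := (At.congr_of_eventuallyEq hevt).deriv
  -- x-derivative of pt ψ
  have su := slice_x u hud p
  have sux := slice_x (px u) hdux p
  have suxx := slice_x (px (px u)) hduxx p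
  have sψ := slice_x ψ hψd p
  have T1 := ((suxx.mul sψ).sub (sψ.mul suxx)).const_smul α
  have C := (su.mul sux).sub (sux.mul su)
  have T2 := ((C.mul sψ).sub (sψ.mul C)).const_smul (2 * α ^ 2)
  have C3 := (su.mul su).mul su
  have T3 := ((C3.mul sψ).sub (sψ.mul C3)).const_smul ((β - 4 * α ^ 2) * α)
  have Ax := (T1.add T2).add T3
  have hevx : (fun y => pt ψ (p.1, y)) =ᶠ[nhds p.2]
      (fun y => α • (px (px u) (p.1, y) * ψ (p.1, y) - ψ (p.1, y) * px (px u) (p.1, y))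
        + (2 * α ^ 2) • ((u (p.1, y) * px u (p.1, y) - px u (p.1, y) * u (p.1, y)) * ψ (p.1, y)
          - ψ (p.1, y) * (u (p.1, y) * px u (p.1, y) - px u (p.1, y) * u (p.1, y)))
        + ((β - 4 * α ^ 2) * α) • (u (p.1, y) * u (p.1, y) * u (p.1, y) * ψ (p.1, y)
          - ψ (p.1, y) * (u (p.1, y) * u (p.1, y) * u (p.1, y)))) :=
    Filter.Eventually.of_forall fun y => by
      simp only [hψt (p.1, y), pow_succ, pow_zero, one_mul]
  have h3 := (Ax.congr_of_eventuallyEq hevx).deriv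
  rw [show pt φ p = deriv (fun s => φ (s, p.2)) p.1 from rfl, h1,
    clairaut ψ hψ p,
    show px (pt ψ) p = deriv (fun y => pt ψ (p.1, y)) p.2 from rfl, h3,
    hut p, hψt p, hφ]
  simp only [Prod.mk.eta, Pi.mul_apply, Pi.sub_apply]
  generalize px (px (px u)) p = Uxxx
  generalize px (px u) p = Uxx
  generalize px u p = Ux
  generalize hU : u p = U
  generalize px ψ p = Px
  generalize ψ p = P
  exact key _ α β U Ux Uxx Uxxx P Px
end

section
/- Let α ∈ ℝ and let u, ψ : ℝ × ℝ → ℍ be smooth with u_t = 3α² u*u_x*u + u_xxx (the mKdV equation u_t = u u_x u + u_xxx after scaling, i.e., the first mKdV family at β = 3α²) and ψ_t = α u_xx*ψ + α²[u,u_x]*ψ + α³ u³*ψ. Then the function φ := ψ_x − α u*ψ satisfies φ_t = α u_xx*φ + α²[u,u_x]*φ + α³ u³*φ. -/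
namespace MkdvAux

local notation "ℍ" => Quaternion ℝ

lemma hasDerivAt_slice_x {f : ℝ × ℝ → ℍ} (hf : ContDiff ℝ (⊤ : ℕ∞) f) (p : ℝ × ℝ) :
    HasDerivAt (fun y => f (p.1, y)) (fderiv ℝ f p ((0 : ℝ), (1 : ℝ))) p.2 := by
  have hc : HasDerivAt (fun y : ℝ => ((p.1, y) : ℝ × ℝ)) ((0 : ℝ), (1 : ℝ)) p.2 :=
    (hasDerivAt_const _ _).prodMk (hasDerivAt_id _)
  have hfd : HasFDerivAt f (fderiv ℝ f p) p := (hf.differentiable (by simp) p).hasFDerivAt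
  exact hfd.comp_hasDerivAt p.2 hc

lemma hasDerivAt_slice_t {f : ℝ × ℝ → ℍ} (hf : ContDiff ℝ (⊤ : ℕ∞) f) (p : ℝ × ℝ) :
    HasDerivAt (fun s => f (s, p.2)) (fderiv ℝ f p ((1 : ℝ), (0 : ℝ))) p.1 := by
  have hc : HasDerivAt (fun s : ℝ => ((s, p.2) : ℝ × ℝ)) ((1 : ℝ), (0 : ℝ)) p.1 :=
    (hasDerivAt_id _).prodMk (hasDerivAt_const _ _)
  have hfd : HasFDerivAt f (fderiv ℝ f p) p := (hf.differentiable (by simp) p).hasFDerivAt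
  exact hfd.comp_hasDerivAt p.1 hc

lemma px_eq {f : ℝ × ℝ → ℍ} (hf : ContDiff ℝ (⊤ : ℕ∞) f) (p : ℝ × ℝ) :
    px f p = fderiv ℝ f p ((0 : ℝ), (1 : ℝ)) :=
  (hasDerivAt_slice_x hf p).deriv

lemma pt_eq {f : ℝ × ℝ → ℍ} (hf : ContDiff ℝ (⊤ : ℕ∞) f) (p : ℝ × ℝ) :
    pt f p = fderiv ℝ f p ((1 : ℝ), (0 : ℝ)) :=
  (hasDerivAt_slice_t hf p).deriv

lemma sd_x {f : ℝ × ℝ → ℍ} (hf : ContDiff ℝ (⊤ : ℕ∞) f) (p : ℝ × ℝ) :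
    HasDerivAt (fun y => f (p.1, y)) (px f p) p.2 := by
  rw [px_eq hf p]; exact hasDerivAt_slice_x hf p

lemma sd_t {f : ℝ × ℝ → ℍ} (hf : ContDiff ℝ (⊤ : ℕ∞) f) (p : ℝ × ℝ) :
    HasDerivAt (fun s => f (s, p.2)) (pt f p) p.1 := by
  rw [pt_eq hf p]; exact hasDerivAt_slice_t hf p

lemma contDiff_px {f : ℝ × ℝ → ℍ} (hf : ContDiff ℝ (⊤ : ℕ∞) f) : ContDiff ℝ (⊤ : ℕ∞) (px f) := by
  have h : px f = fun p => fderiv ℝ f p ((0 : ℝ), (1 : ℝ)) := funext (px_eq hf)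
  rw [h]
  exact (hf.fderiv_right (by simp)).clm_apply contDiff_const

lemma contDiff_pt {f : ℝ × ℝ → ℍ} (hf : ContDiff ℝ (⊤ : ℕ∞) f) : ContDiff ℝ (⊤ : ℕ∞) (pt f) := by
  have h : pt f = fun p => fderiv ℝ f p ((1 : ℝ), (0 : ℝ)) := funext (pt_eq hf)
  rw [h]
  exact (hf.fderiv_right (by simp)).clm_apply contDiff_const

lemma mixed_symm {f : ℝ × ℝ → ℍ} (hf : ContDiff ℝ (⊤ : ℕ∞) f) (p : ℝ × ℝ) :
    pt (px f) p = px (pt f) p := by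
  have hdf : ContDiff ℝ (⊤ : ℕ∞) (fderiv ℝ f) := hf.fderiv_right (by simp)
  have hxeq : px f = fun q => fderiv ℝ f q ((0 : ℝ), (1 : ℝ)) := funext (px_eq hf)
  have hteq : pt f = fun q => fderiv ℝ f q ((1 : ℝ), (0 : ℝ)) := funext (pt_eq hf)
  have h1 : pt (px f) p = fderiv ℝ (px f) p ((1 : ℝ), (0 : ℝ)) := pt_eq (contDiff_px hf) p
  have h2 : px (pt f) p = fderiv ℝ (pt f) p ((0 : ℝ), (1 : ℝ)) := px_eq (contDiff_pt hf) p
  have hd : DifferentiableAt ℝ (fderiv ℝ f) p := (hdf.differentiable (by simp)) p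
  have e1 : fderiv ℝ (px f) p = fderiv ℝ (fun q => fderiv ℝ f q ((0 : ℝ), (1 : ℝ))) p := by
    rw [hxeq]
  have e2 : fderiv ℝ (pt f) p = fderiv ℝ (fun q => fderiv ℝ f q ((1 : ℝ), (0 : ℝ))) p := by
    rw [hteq]
  rw [h1, h2, e1, e2, fderiv_clm_apply hd (differentiableAt_const _),
    fderiv_clm_apply hd (differentiableAt_const _)]
  simp only [fderiv_const, Pi.zero_apply, ContinuousLinearMap.comp_zero,
    ContinuousLinearMap.zero_apply, add_zero, ContinuousLinearMap.flip_apply,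
    ContinuousLinearMap.add_apply]
  have hsymm : IsSymmSndFDerivAt ℝ f p := by
    refine ContDiffAt.isSymmSndFDerivAt hf.contDiffAt ?_
    rw [minSmoothness_of_isRCLikeNormedField]; exact WithTop.coe_le_coe.mpr (le_top : (2 : ℕ∞) ≤ ⊤)
  simpa using hsymm.eq ((1 : ℝ), (0 : ℝ)) ((0 : ℝ), (1 : ℝ))

lemma key {A : Type*} [Ring A] [Algebra ℝ A] (α : ℝ) (U U1 U2 U3 P P1 : A) :
  α • (U3 * P) + α • (U2 * P1) +
          (α ^ 2 • (U1 * (U1 * P)) + α ^ 2 • (U * (U2 * P)) -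
              (α ^ 2 • (U2 * (U * P)) + α ^ 2 • (U1 * (U1 * P))) +
            (α ^ 2 • (U * (U1 * P1)) - α ^ 2 • (U1 * (U * P1)))) +
        ((α * (α * α)) • (U1 * (U * (U * P))) + (α * (α * α)) • (U * (U1 * (U * P))) +
            (α * (α * α)) • (U * (U * (U1 * P))) +
          (α * (α * α)) • (U * (U * (U * P1)))) -
      ((α * (3 * α ^ 2)) • (U * (U1 * (U * P))) + α • (U3 * P) +
        ((α * α) • (U * (U2 * P)) +
            ((α * α ^ 2) • (U * (U * (U1 * P))) - (α * α ^ 2) • (U * (U1 * (U * P)))) +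
          (α * (α * (α * α))) • (U * (U * (U * (U * P)))))) =
    α • (U2 * P1) - (α * α) • (U2 * (U * P)) +
        (α ^ 2 • (U * (U1 * P1)) - α ^ 2 • (U1 * (U * P1)) -
          ((α ^ 2 * α) • (U * (U1 * (U * P))) - (α ^ 2 * α) • (U1 * (U * (U * P))))) +
      ((α * (α * α)) • (U * (U * (U * P1))) - (α * (α * (α * α))) • (U * (U * (U * (U * P))))) := by
  module

end MkdvAux

open MkdvAux

set_option maxHeartbeats 2000000 in
/-- Lax pair for the quaternion mKdV equation `uₜ = 3α² u uₓ u + uₓₓₓ`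
(the first mKdV family at `β = 3α²`). -/
theorem mkdv_uux_lax (α : ℝ) (u ψ φ : ℝ × ℝ → Quaternion ℝ)
    (hu : ContDiff ℝ (⊤ : ℕ∞) u) (hψ : ContDiff ℝ (⊤ : ℕ∞) ψ)
    (hut : ∀ p, pt u p = (3 * α ^ 2) • (u p * px u p * u p) + px (px (px u)) p)
    (hψt : ∀ p, pt ψ p = α • (px (px u) p * ψ p)
      + (α ^ 2) • ((u p * px u p - px u p * u p) * ψ p)
      + (α ^ 3) • (u p ^ 3 * ψ p))
    (hφ : φ = fun p => px ψ p - α • (u p * ψ p)) :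
    ∀ p, pt φ p = α • (px (px u) p * φ p)
      + (α ^ 2) • ((u p * px u p - px u p * u p) * φ p)
      + (α ^ 3) • (u p ^ 3 * φ p) := by
  subst hφ
  intro p
  have hpxu : ContDiff ℝ (⊤ : ℕ∞) (px u) := contDiff_px hu
  have hpxxu : ContDiff ℝ (⊤ : ℕ∞) (px (px u)) := contDiff_px hpxu
  have hpxψ : ContDiff ℝ (⊤ : ℕ∞) (px ψ) := contDiff_px hψ
  -- step 1: t-derivative of φ
  have hφt : pt (fun q => px ψ q - α • (u q * ψ q)) p
      = pt (px ψ) p - α • (pt u p * ψ p + u p * pt ψ p) := by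
    have h := (sd_t hpxψ p).sub (((sd_t hu p).mul (sd_t hψ p)).const_smul α)
    exact h.deriv
  -- step 2: mixed partials commute
  have hmix : pt (px ψ) p = px (pt ψ) p := mixed_symm hψ p
  -- step 3: pt ψ = W as functions
  have hψt' : pt ψ = fun q => α • (px (px u) q * ψ q)
      + (α ^ 2) • ((u q * px u q - px u q * u q) * ψ q)
      + (α ^ 3) • (u q ^ 3 * ψ q) := funext hψt
  -- derivative of u^3 slice
  have hu3 : HasDerivAt (fun y => u (p.1, y) ^ 3)
      ((px u p * u p + u p * px u p) * u p + u p * u p * px u p) p.2 := by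
    have h := ((sd_x hu p).mul (sd_x hu p)).mul (sd_x hu p)
    have e : (fun y => u (p.1, y) ^ 3) = fun y => u (p.1, y) * u (p.1, y) * u (p.1, y) := by
      funext y; rw [pow_three']
    rw [e]; exact h
  -- step 4: x-derivative of W
  have hWx : px (fun q => α • (px (px u) q * ψ q)
      + (α ^ 2) • ((u q * px u q - px u q * u q) * ψ q)
      + (α ^ 3) • (u q ^ 3 * ψ q)) p
      = α • ((px (px (px u)) p * ψ p + px (px u) p * px ψ p))
      + (α ^ 2) • (((px u p * px u p + u p * px (px u) p)
          - (px (px u) p * u p + px u p * px u p)) * ψ p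
          + (u p * px u p - px u p * u p) * px ψ p)
      + (α ^ 3) • (((px u p * u p + u p * px u p) * u p + u p * u p * px u p) * ψ p
          + u p ^ 3 * px ψ p) := by
    have h :=
      ((((sd_x hpxxu p).mul (sd_x hψ p)).const_smul α).add
        ((((((sd_x hu p).mul (sd_x hpxu p)).sub
          ((sd_x hpxu p).mul (sd_x hu p))).mul (sd_x hψ p)).const_smul (α ^ 2)))).add
        ((hu3.mul (sd_x hψ p)).const_smul (α ^ 3))
    exact h.deriv
  rw [hφt, hmix, hψt', hWx, hut p]
  beta_reduce
  simp only [pow_three', smul_add, smul_sub, mul_add, add_mul, sub_mul, mul_sub,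
    smul_mul_assoc, mul_smul_comm, smul_smul, mul_assoc]
  generalize px (px (px u)) p = U3
  generalize px (px u) p = U2
  generalize px u p = U1
  generalize px ψ p = P1
  generalize u p = U
  generalize ψ p = P
  exact key α U U1 U2 U3 P P1
end
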